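/- arXiv:1904.08402 — 5 statements merged into one kernel-verified Lean document; each statement's English description precedes it below -/
import Mathlib

section
/- There exists a constant C > 0 (one may take C = 3) such that every Dyck word σ with |σ| ≥ 2 satisfies width(σ) ≤ C · log₂ |σ|. -/
/-- A Dyck word: entries ±1, total sum zero, all prefix sums nonnegative. -/
def IsDyck (w : List ℤ) : Prop :=
  (∀ a ∈ w, a = 1 ∨ a = -1) ∧ w.sum = 0 ∧ ∀ k, 0 ≤ (w.take k).sum

/-- Width of a finite set of naturals: the least number of intervals of
consecutive integers whose union equals the set. -/
noncomputable def setWidth (S : Finset ℕ) : ℕ :=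
  sInf {k | ∃ f : Fin k → ℕ × ℕ, (S : Set ℕ) = ⋃ i, Set.Icc (f i).1 (f i).2}

/-- A re-pairing of a word `w` over `{+1, -1}` (positions are 0-based):
a sequence of pairs (ℓᵢ, rᵢ) with w(ℓᵢ) = +1, w(rᵢ) = −1, ℓᵢ < rᵢ, such that
every position of `w` occurs in exactly one pair. -/
structure RePairing (w : List ℤ) where
  pairs : List (ℕ × ℕ)
  perm : (pairs.flatMap fun q => [q.1, q.2]).Perm (List.range w.length)
  lt : ∀ q ∈ pairs, q.1 < q.2
  plus : ∀ q ∈ pairs, w.getD q.1 0 = 1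
  minus : ∀ q ∈ pairs, w.getD q.2 0 = -1

/-- The width of a re-pairing: maximum over times `t` of the width of the set
of positions erased within the first `t` pairs. -/
noncomputable def repWidth {w : List ℤ} (p : RePairing w) : ℕ :=
  (Finset.range (p.pairs.length + 1)).sup
    fun t => setWidth ((p.pairs.take t).flatMap fun q => [q.1, q.2]).toFinset

/-- Width of a word: minimum width over all its re-pairings. -/
noncomputable def dyckWidth (w : List ℤ) : ℕ :=
  sInf {k | ∃ p : RePairing w, repWidth p = k}


lemma setWidth_le {S : Finset ℕ} {k : ℕ} (f : Fin k → ℕ × ℕ)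
    (h : (S : Set ℕ) = ⋃ i, Set.Icc (f i).1 (f i).2) : setWidth S ≤ k :=
  Nat.sInf_le ⟨f, h⟩

lemma setWidth_spec (S : Finset ℕ) :
    ∃ f : Fin S.card → ℕ × ℕ, (S : Set ℕ) = ⋃ i, Set.Icc (f i).1 (f i).2 := by
  refine ⟨fun i => (S.toList.getD i 0, S.toList.getD i 0), ?_⟩
  ext x
  simp only [Set.mem_iUnion, Set.mem_Icc, Finset.mem_coe]
  constructor
  · intro hx
    have hx' : x ∈ S.toList := Finset.mem_toList.2 hx
    obtain ⟨n, hn, hget⟩ := List.mem_iff_getElem.1 hx'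
    have hn' : n < S.card := by rwa [Finset.length_toList] at hn
    refine ⟨⟨n, hn'⟩, ?_⟩
    have : S.toList.getD n 0 = x := by
      rw [List.getD_eq_getElem _ _ hn]; exact hget
    simp only [this]
    exact ⟨le_refl x, le_refl x⟩
  · rintro ⟨i, h1, h2⟩
    have hi : (i : ℕ) < S.toList.length := by
      rw [Finset.length_toList]; exact i.2
    have : S.toList.getD i 0 = x := le_antisymm h1 h2
    rw [← this, List.getD_eq_getElem _ _ hi]
    exact Finset.mem_toList.1 (List.getElem_mem hi)

lemma setWidth_le_card (S : Finset ℕ) : setWidth S ≤ S.card := by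
  obtain ⟨f, hf⟩ := setWidth_spec S
  exact setWidth_le f hf

lemma setWidth_cover (S : Finset ℕ) :
    ∃ f : Fin (setWidth S) → ℕ × ℕ, (S : Set ℕ) = ⋃ i, Set.Icc (f i).1 (f i).2 := by
  have h : {k | ∃ f : Fin k → ℕ × ℕ,
      (S : Set ℕ) = ⋃ i, Set.Icc (f i).1 (f i).2}.Nonempty :=
    ⟨S.card, setWidth_spec S⟩
  exact Nat.sInf_mem h

lemma setWidth_image_add (S : Finset ℕ) (A : ℕ) :
    setWidth (S.image (fun x => x + A)) ≤ setWidth S := by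
  obtain ⟨f, hf⟩ := setWidth_cover S
  have hmem : ∀ y, y ∈ S ↔ ∃ i, (f i).1 ≤ y ∧ y ≤ (f i).2 := by
    intro y
    have := Set.ext_iff.1 hf y
    simpa [Set.mem_iUnion] using this
  refine setWidth_le (fun i => ((f i).1 + A, (f i).2 + A)) ?_
  ext x
  simp only [Finset.coe_image, Set.mem_image, Finset.mem_coe, Set.mem_iUnion, Set.mem_Icc]
  constructor
  · rintro ⟨y, hy, rfl⟩
    obtain ⟨i, h1, h2⟩ := (hmem y).1 hy
    exact ⟨i, by omega, by omega⟩
  · rintro ⟨i, h1, h2⟩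
    refine ⟨x - A, (hmem _).2 ⟨i, by omega, by omega⟩, by omega⟩

def adjf (A L : ℕ) : ℕ → ℕ := fun i => if i < A then i else i + L

lemma setWidth_union_bound (A L : ℕ) (hL : 1 ≤ L) (B : Finset ℕ) :
    setWidth ((Finset.range L).image (fun x => x + A) ∪ B.image (adjf A L))
      ≤ setWidth B + 1 := by
  classical
  obtain ⟨f, hf⟩ := setWidth_cover B
  have hmem : ∀ y, y ∈ B ↔ ∃ i, (f i).1 ≤ y ∧ y ≤ (f i).2 := by
    intro y
    have := Set.ext_iff.1 hf y
    simpa [Set.mem_iUnion] using this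
  set T : ℕ × ℕ → ℕ × ℕ := fun q =>
    if q.2 < A then q else if A ≤ q.1 then (q.1 + L, q.2 + L) else (q.1, q.2 + L) with hT
  refine setWidth_le (Fin.snoc (fun i => T (f i)) (A, A + L - 1)) ?_
  ext x
  simp only [Finset.coe_union, Set.mem_union, Finset.coe_image, Set.mem_image,
    Finset.mem_coe, Finset.mem_range, Set.mem_iUnion, Set.mem_Icc]
  constructor
  · rintro (⟨j, hj, rfl⟩ | ⟨y, hy, rfl⟩)
    · refine ⟨Fin.last _, ?_⟩
      rw [Fin.snoc_last]
      show A ≤ j + A ∧ j + A ≤ A + L - 1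
      omega
    · obtain ⟨i, h1, h2⟩ := (hmem y).1 hy
      refine ⟨i.castSucc, ?_⟩
      rw [Fin.snoc_castSucc]
      rcases hfi : f i with ⟨u, v⟩
      rw [hfi] at h1 h2
      dsimp only at h1 h2
      simp only [hT, adjf]
      split_ifs <;> dsimp only <;> omega
  · rintro ⟨i, hx1, hx2⟩
    induction i using Fin.lastCases with
    | last =>
      rw [Fin.snoc_last] at hx1 hx2
      dsimp only at hx1 hx2
      exact Or.inl ⟨x - A, by omega, by omega⟩
    | cast i =>
      rw [Fin.snoc_castSucc] at hx1 hx2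
      rcases hfi : f i with ⟨u, v⟩
      rw [hfi] at hx1 hx2
      simp only [hT] at hx1 hx2
      by_cases h1 : v < A
      · rw [if_pos (show ((u,v) : ℕ × ℕ).2 < A from h1)] at hx1 hx2
        dsimp only at hx1 hx2
        refine Or.inr ⟨x, (hmem x).2 ⟨i, ?_, ?_⟩, ?_⟩
        · rw [hfi]; show u ≤ x; omega
        · rw [hfi]; show x ≤ v; omega
        · simp only [adjf]; rw [if_pos (by omega)]
      · rw [if_neg (show ¬ ((u,v) : ℕ × ℕ).2 < A from h1)] at hx1 hx2
        by_cases h2 : A ≤ u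
        · rw [if_pos (show A ≤ ((u,v) : ℕ × ℕ).1 from h2)] at hx1 hx2
          dsimp only at hx1 hx2
          refine Or.inr ⟨x - L, (hmem _).2 ⟨i, ?_, ?_⟩, ?_⟩
          · rw [hfi]; show u ≤ x - L; omega
          · rw [hfi]; show x - L ≤ v; omega
          · simp only [adjf]; rw [if_neg (by omega)]; omega
        · rw [if_neg (show ¬ A ≤ ((u,v) : ℕ × ℕ).1 from h2)] at hx1 hx2
          dsimp only at hx1 hx2
          rcases lt_or_ge x A with hxA | hxA
          · refine Or.inr ⟨x, (hmem x).2 ⟨i, ?_, ?_⟩, ?_⟩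
            · rw [hfi]; show u ≤ x; omega
            · rw [hfi]; show x ≤ v; omega
            · simp only [adjf]; rw [if_pos hxA]
          · rcases lt_or_ge x (A + L) with hxAL | hxAL
            · exact Or.inl ⟨x - A, by omega, by omega⟩
            · refine Or.inr ⟨x - L, (hmem _).2 ⟨i, ?_, ?_⟩, ?_⟩
              · rw [hfi]; show u ≤ x - L; omega
              · rw [hfi]; show x - L ≤ v; omega
              · simp only [adjf]; rw [if_neg (by omega)]; omega

lemma dyck_nil : IsDyck [] := ⟨by simp, by simp, by simp⟩

lemma dyck_append {u v : List ℤ} (hu : IsDyck u) (hv : IsDyck v) : IsDyck (u ++ v) := by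
  obtain ⟨hu1, hu2, hu3⟩ := hu
  obtain ⟨hv1, hv2, hv3⟩ := hv
  refine ⟨?_, by simp [hu2, hv2], ?_⟩
  · intro a ha
    rcases List.mem_append.1 ha with h | h
    · exact hu1 a h
    · exact hv1 a h
  · intro k
    rw [List.take_append, List.sum_append]
    exact add_nonneg (hu3 k) (hv3 _)

lemma dyck_wrap {β : List ℤ} (hβ : IsDyck β) : IsDyck (1 :: β ++ [-1]) := by
  obtain ⟨h1, h2, h3⟩ := hβ
  refine ⟨?_, by simp [h2], ?_⟩
  · intro a ha
    simp only [List.cons_append, List.mem_cons, List.mem_append, List.mem_singleton] at ha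
    rcases ha with rfl | h | h
    · exact Or.inl rfl
    · exact h1 a h
    · simp at h
      exact Or.inr h
  · intro k
    cases k with
    | zero => simp
    | succ k =>
      rw [List.cons_append, List.take_succ_cons, List.sum_cons,
        List.take_append, List.sum_append]
      have h4 : 0 ≤ (β.take k).sum := h3 k
      have h5 : (-1 : ℤ) ≤ (([-1] : List ℤ).take (k - β.length)).sum := by
        cases h : k - β.length with
        | zero => simp
        | succ m => simp
      omega

lemma dyck_middle {a b c : List ℤ} (h : IsDyck (a ++ b ++ c)) (hb : IsDyck b) :
    IsDyck (a ++ c) := by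
  obtain ⟨h1, h2, h3⟩ := h
  obtain ⟨hb1, hb2, hb3⟩ := hb
  refine ⟨?_, ?_, ?_⟩
  · intro x hx
    apply h1
    rcases List.mem_append.1 hx with h | h
    · simp [h]
    · simp [h]
  · have := h2
    simp only [List.sum_append] at this ⊢
    omega
  · intro k
    rcases le_or_gt k a.length with hk | hk
    · have : (a ++ c).take k = (a ++ b ++ c).take k := by
        rw [List.append_assoc, List.take_append,
          List.take_append (l₁ := a)]
        have : k - a.length = 0 := by omega
        simp [this]
      rw [this]
      exact h3 k
    · set m := k - a.length with hm
      have hsplit : ((a ++ c).take k).sum = a.sum + (c.take m).sum := by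
        rw [List.take_append, List.sum_append,
          List.take_of_length_le (by omega)]
      have hsplit2 : ((a ++ b ++ c).take (a.length + b.length + m)).sum
          = a.sum + b.sum + (c.take m).sum := by
        rw [List.append_assoc, List.take_append, List.sum_append,
          List.take_of_length_le (by omega), List.take_append,
          List.sum_append, List.take_of_length_le (by omega)]
        have : a.length + b.length + m - a.length - b.length = m := by omega
        rw [this, add_assoc]
      have := h3 (a.length + b.length + m)
      rw [hsplit2] at this
      rw [hsplit]
      omega

lemma dyck_cons {w : List ℤ} (h : IsDyck w) (hne : w ≠ []) :
    ∃ β γ, w = 1 :: (β ++ -1 :: γ) ∧ IsDyck β ∧ IsDyck γ := by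
  classical
  obtain ⟨hpm, hsum, hpre⟩ := h
  obtain ⟨x, w', rfl⟩ := List.exists_cons_of_ne_nil hne
  have hx : x = 1 := by
    have h1 := hpre 1
    simp only [List.take_succ_cons, List.take_zero, List.sum_cons, List.sum_nil,
      add_zero] at h1
    rcases hpm x (by simp) with h | h
    · exact h
    · omega
  subst hx
  -- find least k ≥ 1 with prefix sum 0
  have hex : ∃ k, k ≠ 0 ∧ (((1 : ℤ) :: w').take k).sum = 0 := by
    refine ⟨(1 :: w' : List ℤ).length, by simp, ?_⟩
    rw [List.take_length]
    exact hsum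
  obtain ⟨j, ⟨hj0, hjsum⟩, hjmin0⟩ :
      ∃ j, (j ≠ 0 ∧ (((1:ℤ) :: w').take j).sum = 0) ∧
        ∀ k, k < j → ¬(k ≠ 0 ∧ (((1:ℤ) :: w').take k).sum = 0) :=
    ⟨Nat.find hex, Nat.find_spec hex, fun k hk => Nat.find_min hex hk⟩
  clear hex
  have hjmin : ∀ k, 0 < k → k < j → 1 ≤ (((1 : ℤ) :: w').take k).sum := by
    intro k hk0 hkj
    have := hjmin0 k hkj
    push_neg at this
    have h2 := this (by omega)
    have h3 := hpre k
    omega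
  have hj2 : 2 ≤ j := by
    rcases Nat.lt_or_ge j 2 with h | h
    · interval_cases j
      · omega
      · simp at hjsum
    · exact h
  have hjlen : j ≤ w'.length + 1 := by
    by_contra hcon
    push_neg at hcon
    have hws : (((1:ℤ) :: w').take (w'.length + 1)).sum = 0 := by
      rw [List.take_of_length_le (by simp)]
      exact hsum
    have := hjmin0 (w'.length + 1) (by omega)
    push_neg at this
    have := this (by omega)
    omega
  -- the element at position j - 2 of w'
  have hidx : j - 2 < w'.length := by omega
  obtain ⟨e, he⟩ : ∃ e, w'[j-2] = e := ⟨w'[j-2], rfl⟩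
  -- prefix sums of w'
  have htkw : ∀ m, (((1:ℤ) :: w').take (m+1)).sum = 1 + (w'.take m).sum := by
    intro m
    simp [List.take_succ_cons]
  have hs1 : (w'.take (j-1)).sum = -1 := by
    have := hjsum
    have hrw : j = (j - 1) + 1 := by omega
    rw [hrw, htkw] at this
    omega
  have hs2 : 0 ≤ (w'.take (j-2)).sum := by
    have := hjmin (j-1) (by omega) (by omega)
    have hrw : j - 1 = (j - 2) + 1 := by omega
    rw [hrw, htkw] at this
    omega
  have hsplit : w'.take (j-1) = w'.take (j-2) ++ [e] := by
    have hrw : j - 1 = (j - 2) + 1 := by omega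
    rw [hrw, List.take_succ, List.getElem?_eq_getElem hidx]
    simp [← he]
  have hesum : (w'.take (j-2)).sum + e = -1 := by
    rw [hsplit, List.sum_append] at hs1
    simpa using hs1
  have hepm : e = 1 ∨ e = -1 := hpm e (by
    simp only [List.mem_cons]
    exact Or.inr (he ▸ List.getElem_mem hidx))
  have he1 : e = -1 := by omega
  have hs3 : (w'.take (j-2)).sum = 0 := by omega
  refine ⟨w'.take (j-2), w'.drop (j-1), ?_, ⟨?_, hs3, ?_⟩, ⟨?_, ?_, ?_⟩⟩
  · -- structural equality
    have hdrop : w'.drop (j-2) = e :: w'.drop (j-1) := by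
      have := List.drop_eq_getElem_cons hidx
      rw [this, he]
      have h56 : j - 2 + 1 = j - 1 := by omega
      rw [h56]
    have : w' = w'.take (j-2) ++ w'.drop (j-2) := (List.take_append_drop _ _).symm
    rw [hdrop, he1] at this
    rw [← this]
  · intro a ha
    exact hpm a (by simp [List.mem_of_mem_take ha])
  · -- prefix sums of β
    intro k
    rcases le_or_gt (j-2) k with hk | hk
    · rw [List.take_of_length_le (by simp; omega)]
      omega
    · rw [List.take_take]
      have hmin : min k (j-2) = k := by omega
      rw [hmin]
      have := hjmin (k+1) (by omega) (by omega)
      rw [htkw] at this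
      omega
  · intro a ha
    exact hpm a (by simp [List.mem_of_mem_drop ha])
  · -- total sum of γ
    have hw'sum : w'.sum = -1 := by
      have : ((1:ℤ) :: w').sum = 1 + w'.sum := by simp
      omega
    have : w'.sum = (w'.take (j-1)).sum + (w'.drop (j-1)).sum := by
      rw [← List.sum_append, List.take_append_drop]
    omega
  · -- prefix sums of γ
    intro k
    have hkey : w'.take (j - 1 + k) = w'.take (j-1) ++ (w'.drop (j-1)).take k := by
      rw [List.take_add]
    have := hpre (j + k)
    have hrw : j + k = (j - 1 + k) + 1 := by omega
    rw [hrw, htkw, hkey, List.sum_append] at this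
    omega

lemma flat_mapPair (φ : ℕ → ℕ) (l : List (ℕ × ℕ)) :
    ((l.map fun q => (φ q.1, φ q.2)).flatMap fun q => [q.1, q.2])
      = (l.flatMap fun q => [q.1, q.2]).map φ := by
  induction l with
  | nil => simp
  | cons q l ih => simp [ih]

lemma pair_bounds {w : List ℤ} (p : RePairing w) {q : ℕ × ℕ} (hq : q ∈ p.pairs) :
    q.1 < w.length ∧ q.2 < w.length := by
  constructor
  · have h1 : q.1 ∈ p.pairs.flatMap (fun q => [q.1, q.2]) :=
      List.mem_flatMap.2 ⟨q, hq, by simp⟩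
    have := p.perm.mem_iff.1 h1
    simpa using this
  · have h1 : q.2 ∈ p.pairs.flatMap (fun q => [q.1, q.2]) :=
      List.mem_flatMap.2 ⟨q, hq, by simp⟩
    have := p.perm.mem_iff.1 h1
    simpa using this

lemma toFinset_listmap (f : ℕ → ℕ) (l : List ℕ) :
    (l.map f).toFinset = l.toFinset.image f := by
  ext x; simp

lemma repWidth_le_length {w : List ℤ} (p : RePairing w) : repWidth p ≤ w.length := by
  apply Finset.sup_le
  intro t _
  refine le_trans (setWidth_le_card _) (le_trans (List.toFinset_card_le _) ?_)
  have hsplit : p.pairs.flatMap (fun q => [q.1, q.2])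
      = (p.pairs.take t).flatMap (fun q => [q.1, q.2])
        ++ (p.pairs.drop t).flatMap (fun q => [q.1, q.2]) := by
    rw [← List.flatMap_append, List.take_append_drop]
  have hlen := p.perm.length_eq
  rw [hsplit, List.length_append, List.length_range] at hlen
  omega

lemma flat_shift (A : ℕ) (l : List (ℕ × ℕ)) :
    ((l.map fun q => (q.1 + A, q.2 + A)).flatMap fun q => [q.1, q.2])
      = (l.flatMap fun q => [q.1, q.2]).map (fun x => x + A) := by
  induction l with
  | nil => simp
  | cons q l ih => simp [ih]

lemma exists_repairing : ∀ n (w : List ℤ), w.length = n → IsDyck w →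
    Nonempty (RePairing w) := by
  intro n
  induction n using Nat.strong_induction_on with
  | _ n ih =>
    intro w hlen hd
    rcases eq_or_ne w [] with rfl | hne
    · exact ⟨⟨[], by simp, by simp, by simp, by simp⟩⟩
    obtain ⟨β, γ, rfl, hβ, hγ⟩ := dyck_cons hd hne
    have hlen' : n = β.length + γ.length + 2 := by
      simp at hlen; omega
    obtain ⟨pβ⟩ := ih β.length (by omega) β rfl hβ
    obtain ⟨pγ⟩ := ih γ.length (by omega) γ rfl hγ
    set B := β.length with hB
    set C := γ.length with hC
    refine ⟨⟨(0, B+1) :: (pβ.pairs.map (fun q => (q.1 + 1, q.2 + 1))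
      ++ pγ.pairs.map (fun q => (q.1 + (B+2), q.2 + (B+2)))), ?_, ?_, ?_, ?_⟩⟩
    · -- perm
      have hflat : (((0, B+1) :: (pβ.pairs.map (fun q => (q.1 + 1, q.2 + 1))
            ++ pγ.pairs.map (fun q => (q.1 + (B+2), q.2 + (B+2))))).flatMap
              fun q => [q.1, q.2])
          = 0 :: (B+1) :: ((pβ.pairs.flatMap fun q => [q.1, q.2]).map (fun x => x + 1)
            ++ (pγ.pairs.flatMap fun q => [q.1, q.2]).map (fun x => x + (B+2))) := by
        rw [List.flatMap_cons, List.flatMap_append, flat_shift, flat_shift]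
        rfl
      rw [hflat]
      have h1 : (0 :: (B+1) :: ((pβ.pairs.flatMap fun q => [q.1, q.2]).map (fun x => x + 1)
            ++ (pγ.pairs.flatMap fun q => [q.1, q.2]).map (fun x => x + (B+2)))).Perm
          (0 :: (B+1) :: ((List.range B).map (fun x => x + 1)
            ++ (List.range C).map (fun x => x + (B+2)))) := by
        exact ((( pβ.perm.map _).append (pγ.perm.map _)).cons _).cons _
      refine h1.trans ?_
      have hnd : (0 :: (B+1) :: ((List.range B).map (fun x => x + 1)
            ++ (List.range C).map (fun x => x + (B+2)))).Nodup := by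
        refine List.nodup_cons.2 ⟨?_, List.nodup_cons.2 ⟨?_, ?_⟩⟩
        · simp only [List.mem_cons, List.mem_append, List.mem_map, List.mem_range]
          push_neg
          refine ⟨by omega, ?_, ?_⟩ <;> (intro i hi; omega)
        · simp only [List.mem_append, List.mem_map, List.mem_range]
          push_neg
          refine ⟨?_, ?_⟩ <;> (intro i hi; omega)
        · refine List.Nodup.append ?_ ?_ ?_
          · exact List.Nodup.map (fun a b h => by omega) List.nodup_range
          · exact List.Nodup.map (fun a b h => by omega) List.nodup_range
          · intro x hx hy
            simp only [List.mem_map, List.mem_range] at hx hy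
            obtain ⟨i, hi, rfl⟩ := hx
            obtain ⟨i', hi', he⟩ := hy
            omega
      refine (List.perm_ext_iff_of_nodup hnd List.nodup_range).2 ?_
      intro x
      simp only [List.mem_cons, List.mem_append, List.mem_map, List.mem_range,
        List.length_cons, List.length_append]
      constructor
      · rintro (rfl | rfl | ⟨i, hi, rfl⟩ | ⟨i, hi, rfl⟩) <;> omega
      · intro h
        have hx : x < B + C + 2 := by
          omega
        rcases Nat.lt_or_ge x 1 with h1 | h1
        · exact Or.inl (by omega)
        rcases Nat.lt_or_ge x (B+1) with h2 | h2
        · exact Or.inr (Or.inr (Or.inl ⟨x - 1, by omega, by omega⟩))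
        rcases Nat.lt_or_ge x (B+2) with h3 | h3
        · exact Or.inr (Or.inl (by omega))
        · exact Or.inr (Or.inr (Or.inr ⟨x - (B+2), by omega, by omega⟩))
    · -- lt
      intro q hq
      rcases List.mem_cons.1 hq with rfl | hq
      · simp
      rcases List.mem_append.1 hq with hq | hq
      · obtain ⟨q', hq', rfl⟩ := List.mem_map.1 hq
        have := pβ.lt q' hq'
        simp; omega
      · obtain ⟨q', hq', rfl⟩ := List.mem_map.1 hq
        have := pγ.lt q' hq'
        simp; omega
    · -- plus
      intro q hq
      rcases List.mem_cons.1 hq with rfl | hq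
      · simp
      rcases List.mem_append.1 hq with hq | hq
      · obtain ⟨q', hq', rfl⟩ := List.mem_map.1 hq
        have hb := (pair_bounds pβ hq').1
        have := pβ.plus q' hq'
        show (1 :: (β ++ -1 :: γ)).getD (q'.1 + 1) 0 = 1
        rw [List.getD_cons_succ, List.getD_append _ _ _ _ hb]
        exact this
      · obtain ⟨q', hq', rfl⟩ := List.mem_map.1 hq
        have hb := (pair_bounds pγ hq').1
        have := pγ.plus q' hq'
        show (1 :: (β ++ -1 :: γ)).getD (q'.1 + (B+2)) 0 = 1
        have harith : q'.1 + (B + 2) = (q'.1 + B + 1) + 1 := by omega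
        rw [harith, List.getD_cons_succ, List.getD_append_right _ _ _ _ (by omega)]
        have harith2 : q'.1 + B + 1 - β.length = q'.1 + 1 := by omega
        rw [harith2, List.getD_cons_succ]
        exact this
    · -- minus
      intro q hq
      rcases List.mem_cons.1 hq with rfl | hq
      · show (1 :: (β ++ -1 :: γ)).getD (B + 1) 0 = -1
        rw [List.getD_cons_succ, List.getD_append_right _ _ _ _ (by omega)]
        simp [hB]
      rcases List.mem_append.1 hq with hq | hq
      · obtain ⟨q', hq', rfl⟩ := List.mem_map.1 hq
        have hb := (pair_bounds pβ hq').2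
        have := pβ.minus q' hq'
        show (1 :: (β ++ -1 :: γ)).getD (q'.2 + 1) 0 = -1
        rw [List.getD_cons_succ, List.getD_append _ _ _ _ hb]
        exact this
      · obtain ⟨q', hq', rfl⟩ := List.mem_map.1 hq
        have hb := (pair_bounds pγ hq').2
        have := pγ.minus q' hq'
        show (1 :: (β ++ -1 :: γ)).getD (q'.2 + (B+2)) 0 = -1
        have harith : q'.2 + (B + 2) = (q'.2 + B + 1) + 1 := by omega
        rw [harith, List.getD_cons_succ, List.getD_append_right _ _ _ _ (by omega)]
        have harith2 : q'.2 + B + 1 - β.length = q'.2 + 1 := by omega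
        rw [harith2, List.getD_cons_succ]
        exact this

lemma exists_factor : ∀ n (w : List ℤ), w.length = n → IsDyck w → ∀ m, 1 ≤ m → m ≤ n →
    ∃ a b c, w = a ++ b ++ c ∧ IsDyck b ∧ m ≤ b.length ∧ b.length ≤ 2 * m := by
  intro n
  induction n using Nat.strong_induction_on with
  | _ n ih =>
    intro w hlen hd m hm1 hmn
    rcases le_or_gt n (2 * m) with hsmall | hbig
    · exact ⟨[], w, [], by simp, hd, by omega, by omega⟩
    have hne : w ≠ [] := by
      intro h; subst h; simp at hlen; omega
    obtain ⟨β, γ, rfl, hβ, hγ⟩ := dyck_cons hd hne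
    have hlen' : n = β.length + γ.length + 2 := by
      simp at hlen; omega
    rcases lt_or_ge (2 * m) (β.length + 2) with h1 | h1
    · -- recurse into β
      have hmβ : m ≤ β.length := by omega
      obtain ⟨a', b, c', heq, hb, hb1, hb2⟩ := ih β.length (by omega) β rfl hβ m hm1 hmβ
      refine ⟨1 :: a', b, c' ++ -1 :: γ, ?_, hb, hb1, hb2⟩
      rw [heq]
      simp
    rcases le_or_gt m (β.length + 2) with h2 | h2
    · -- take the block
      refine ⟨[], 1 :: β ++ [-1], γ, ?_, dyck_wrap hβ, by simp; omega, by simp; omega⟩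
      simp
    · -- recurse into γ
      have hmγ : m ≤ γ.length := by omega
      obtain ⟨a', b, c', heq, hb, hb1, hb2⟩ := ih γ.length (by omega) γ rfl hγ m hm1 hmγ
      refine ⟨1 :: β ++ -1 :: a', b, c', ?_, hb, hb1, hb2⟩
      rw [heq]
      simp

lemma adjf_inj (A L : ℕ) : Function.Injective (adjf A L) := by
  intro x y h
  simp only [adjf] at h
  split_ifs at h <;> omega

lemma adjf_mono {A L x y : ℕ} (h : x < y) : adjf A L x < adjf A L y := by
  simp only [adjf]
  split_ifs <;> omega

lemma list_range_toFinset (n : ℕ) : (List.range n).toFinset = Finset.range n := by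
  ext x; simp

lemma compose {a b c : List ℤ} (hbne : b ≠ []) (pb : RePairing b)
    (pac : RePairing (a ++ c)) :
    ∃ p : RePairing (a ++ b ++ c), repWidth p ≤ max (repWidth pb) (repWidth pac + 1) := by
  classical
  set A := a.length with hA
  set L := b.length with hL
  set M := c.length with hM
  have hL1 : 1 ≤ L := by
    rw [hL]
    exact List.length_pos_iff.2 hbne
  have hacl : (a ++ c).length = A + M := by simp [hA, hM]
  have hwl : (a ++ b ++ c).length = A + (L + M) := by simp [hA, hL, hM]
  set P1 : List (ℕ × ℕ) := pb.pairs.map (fun q => (q.1 + A, q.2 + A)) with hP1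
  set P2 : List (ℕ × ℕ) := pac.pairs.map
    (fun q => (adjf A L q.1, adjf A L q.2)) with hP2
  have hP1len : P1.length = pb.pairs.length := by rw [hP1, List.length_map]
  have hP2len : P2.length = pac.pairs.length := by rw [hP2, List.length_map]
  refine ⟨⟨P1 ++ P2, ?_, ?_, ?_, ?_⟩, ?_⟩
  · -- perm
    rw [List.flatMap_append, hP1, hP2, flat_shift, flat_mapPair]
    have h1 : ((pb.pairs.flatMap fun q => [q.1, q.2]).map (fun x => x + A)
          ++ (pac.pairs.flatMap fun q => [q.1, q.2]).map (adjf A L)).Perm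
        ((List.range L).map (fun x => x + A)
          ++ (List.range (A + M)).map (adjf A L)) := by
      refine List.Perm.append (pb.perm.map _) ?_
      have := pac.perm
      rw [hacl] at this
      exact this.map _
    refine h1.trans ?_
    have hnd : ((List.range L).map (fun x => x + A)
        ++ (List.range (A + M)).map (adjf A L)).Nodup := by
      refine List.Nodup.append ?_ ?_ ?_
      · exact List.Nodup.map (fun x y h => by omega) List.nodup_range
      · exact List.Nodup.map (adjf_inj A L) List.nodup_range
      · intro x hx hy
        simp only [List.mem_map, List.mem_range] at hx hy
        obtain ⟨i, hi, rfl⟩ := hx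
        obtain ⟨i', hi', he⟩ := hy
        simp only [adjf] at he
        split_ifs at he <;> omega
    refine (List.perm_ext_iff_of_nodup hnd List.nodup_range).2 ?_
    intro x
    rw [hwl]
    simp only [List.mem_append, List.mem_map, List.mem_range]
    constructor
    · rintro (⟨i, hi, rfl⟩ | ⟨i, hi, rfl⟩)
      · omega
      · simp only [adjf]; split_ifs <;> omega
    · intro hx
      rcases lt_or_ge x A with h1 | h1
      · refine Or.inr ⟨x, by omega, ?_⟩
        simp only [adjf]; rw [if_pos h1]
      rcases lt_or_ge x (A + L) with h2 | h2
      · exact Or.inl ⟨x - A, by omega, by omega⟩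
      · refine Or.inr ⟨x - L, by omega, ?_⟩
        simp only [adjf]; rw [if_neg (by omega)]; omega
  · -- lt
    intro q hq
    rcases List.mem_append.1 hq with hq | hq
    · obtain ⟨q', hq', rfl⟩ := List.mem_map.1 hq
      have := pb.lt q' hq'
      simp only []
      omega
    · obtain ⟨q', hq', rfl⟩ := List.mem_map.1 hq
      exact adjf_mono (pac.lt q' hq')
  · -- plus
    intro q hq
    rcases List.mem_append.1 hq with hq | hq
    · obtain ⟨q', hq', rfl⟩ := List.mem_map.1 hq
      have hb1 := (pair_bounds pb hq').1
      have := pb.plus q' hq'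
      show (a ++ b ++ c).getD (q'.1 + A) 0 = 1
      rw [List.append_assoc, List.getD_append_right _ _ _ _ (by omega)]
      have harith : q'.1 + A - a.length = q'.1 := by omega
      rw [harith, List.getD_append _ _ _ _ hb1]
      exact this
    · obtain ⟨q', hq', rfl⟩ := List.mem_map.1 hq
      have hb1 : q'.1 < A + M := by
        have := (pair_bounds pac hq').1
        rwa [hacl] at this
      have hp := pac.plus q' hq'
      show (a ++ b ++ c).getD (adjf A L q'.1) 0 = 1
      rcases lt_or_ge q'.1 A with h1 | h1
      · rw [show adjf A L q'.1 = q'.1 from by simp only [adjf]; rw [if_pos h1]]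
        rw [List.append_assoc, List.getD_append _ _ _ _ (by omega)]
        rw [List.getD_append _ _ _ _ (by omega)] at hp
        exact hp
      · rw [show adjf A L q'.1 = q'.1 + L from by
          simp only [adjf]; rw [if_neg (by omega)]]
        rw [List.append_assoc, List.getD_append_right _ _ _ _ (by omega)]
        rw [List.getD_append_right _ _ _ _ (by omega)]
        rw [List.getD_append_right _ _ _ _ (by omega)] at hp
        have harith : q'.1 + L - a.length - b.length = q'.1 - a.length := by omega
        rw [harith]
        exact hp
  · -- minus
    intro q hq
    rcases List.mem_append.1 hq with hq | hq
    · obtain ⟨q', hq', rfl⟩ := List.mem_map.1 hq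
      have hb2 := (pair_bounds pb hq').2
      have := pb.minus q' hq'
      show (a ++ b ++ c).getD (q'.2 + A) 0 = -1
      rw [List.append_assoc, List.getD_append_right _ _ _ _ (by omega)]
      have harith : q'.2 + A - a.length = q'.2 := by omega
      rw [harith, List.getD_append _ _ _ _ hb2]
      exact this
    · obtain ⟨q', hq', rfl⟩ := List.mem_map.1 hq
      have hb2 : q'.2 < A + M := by
        have := (pair_bounds pac hq').2
        rwa [hacl] at this
      have hp := pac.minus q' hq'
      show (a ++ b ++ c).getD (adjf A L q'.2) 0 = -1
      rcases lt_or_ge q'.2 A with h1 | h1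
      · rw [show adjf A L q'.2 = q'.2 from by simp only [adjf]; rw [if_pos h1]]
        rw [List.append_assoc, List.getD_append _ _ _ _ (by omega)]
        rw [List.getD_append _ _ _ _ (by omega)] at hp
        exact hp
      · rw [show adjf A L q'.2 = q'.2 + L from by
          simp only [adjf]; rw [if_neg (by omega)]]
        rw [List.append_assoc, List.getD_append_right _ _ _ _ (by omega)]
        rw [List.getD_append_right _ _ _ _ (by omega)]
        rw [List.getD_append_right _ _ _ _ (by omega)] at hp
        have harith : q'.2 + L - a.length - b.length = q'.2 - a.length := by omega
        rw [harith]
        exact hp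
  · -- width bound
    unfold repWidth
    dsimp only
    apply Finset.sup_le
    intro t ht
    rw [Finset.mem_range, List.length_append, hP1len, hP2len] at ht
    simp only [List.take_append, List.flatMap_append,
      List.toFinset_append]
    rcases le_or_gt t pb.pairs.length with hcase | hcase
    · -- phase 1
      have hz : P2.take (t - P1.length) = [] := by
        have : t - P1.length = 0 := by omega
        rw [this, List.take_zero]
      rw [hz]
      have h1 : P1.take t = (pb.pairs.take t).map (fun q => (q.1 + A, q.2 + A)) := by
        rw [hP1, List.map_take]
      rw [h1, flat_shift]
      simp only [List.flatMap_nil, List.toFinset_nil, Finset.union_empty]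
      rw [toFinset_listmap]
      have h5 : setWidth ((pb.pairs.take t).flatMap fun q => [q.1, q.2]).toFinset
          ≤ (Finset.range (pb.pairs.length + 1)).sup
            (fun u => setWidth ((pb.pairs.take u).flatMap fun q => [q.1, q.2]).toFinset) := by
        exact Finset.le_sup
          (f := fun u => setWidth ((pb.pairs.take u).flatMap fun q => [q.1, q.2]).toFinset)
          (s := Finset.range (pb.pairs.length + 1)) (b := t) (Finset.mem_range.2 (by omega))
      exact le_trans (setWidth_image_add _ _) (le_trans h5 (le_max_left _ _))
    · -- phase 2
      have h1 : P1.take t = P1 := List.take_of_length_le (by omega)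
      rw [h1, hP1, flat_shift, toFinset_listmap]
      have h2 : (pb.pairs.flatMap fun q => [q.1, q.2]).toFinset = Finset.range L := by
        rw [List.toFinset_eq_of_perm _ _ pb.perm, list_range_toFinset]
      rw [h2]
      set s := t - P1.length with hs
      have h3 : P2.take s = (pac.pairs.take s).map
          (fun q => (adjf A L q.1, adjf A L q.2)) := by
        rw [hP2, List.map_take]
      rw [h3, flat_mapPair, toFinset_listmap]
      have h4 : setWidth ((pac.pairs.take s).flatMap fun q => [q.1, q.2]).toFinset
          ≤ (Finset.range (pac.pairs.length + 1)).sup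
            (fun u => setWidth ((pac.pairs.take u).flatMap fun q => [q.1, q.2]).toFinset) := by
        have hlt : s < pac.pairs.length + 1 := by rw [hs, hP1len]; omega
        have := Finset.le_sup (f := fun u => setWidth ((pac.pairs.take u).flatMap fun q => [q.1, q.2]).toFinset) (Finset.mem_range.2 hlt)
        exact this
      exact le_trans (setWidth_union_bound A L hL1 _)
        (le_trans (Nat.add_le_add_right h4 1) (le_max_right _ _))

lemma logb_13_16 : Real.logb 2 ((13 : ℝ)/16) ≤ -(1/15) := by
  rw [Real.logb, div_le_iff₀ (Real.log_pos one_lt_two)]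
  have h1 : Real.log (((13 : ℝ)/16)^15) ≤ Real.log ((1:ℝ)/2) :=
    Real.log_le_log (by positivity) (by norm_num)
  rw [Real.log_pow] at h1
  have h2 : Real.log ((1:ℝ)/2) = -Real.log 2 := by rw [one_div, Real.log_inv]
  rw [h2] at h1
  push_cast at h1
  linarith

lemma main_bound : ∀ n (w : List ℤ), w.length = n → IsDyck w → 2 ≤ n →
    ∃ p : RePairing w, (repWidth p : ℝ) ≤ 15 * Real.logb 2 n := by
  intro n
  induction n using Nat.strong_induction_on with
  | _ n ih =>
    intro w hlen hd hn2
    have hlog1 : (1:ℝ) ≤ Real.logb 2 n := by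
      have h22 : Real.logb 2 2 = 1 := Real.logb_self_eq_one (b := 2) (by norm_num)
      rw [← h22]
      exact (Real.logb_le_logb one_lt_two (by norm_num) (by exact_mod_cast (by omega : 0 < n))).2
        (by exact_mod_cast hn2)
    rcases le_or_gt n 15 with hsmall | hbig
    · obtain ⟨p⟩ := exists_repairing n w hlen hd
      refine ⟨p, ?_⟩
      have h := repWidth_le_length p
      rw [hlen] at h
      have h15 : (repWidth p : ℝ) ≤ 15 := by
        have : repWidth p ≤ 15 := by omega
        exact_mod_cast this
      nlinarith
    · obtain ⟨a, b, c, rfl, hb, hb1, hb2⟩ :=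
        exists_factor n w hlen hd (n/4) (by omega) (by omega)
      have hlen2 : a.length + b.length + c.length = n := by
        simp at hlen; omega
      have hac : IsDyck (a ++ c) := dyck_middle hd hb
      have h2b : 2 ≤ b.length := by omega
      have hblt : b.length < n := by omega
      have hacn : (a ++ c).length = a.length + c.length := by simp
      have h2ac : 2 ≤ (a ++ c).length := by rw [hacn]; omega
      have haclt : (a ++ c).length < n := by rw [hacn]; omega
      obtain ⟨pb, hpb⟩ := ih b.length hblt b rfl hb h2b
      obtain ⟨pac, hpac⟩ := ih (a ++ c).length haclt (a ++ c) rfl hac h2ac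
      obtain ⟨p, hp⟩ := compose (by
        intro hcon
        rw [hcon] at h2b
        simp at h2b) pb pac
      refine ⟨p, ?_⟩
      have hcast : (repWidth p : ℝ) ≤ max (repWidth pb : ℝ) ((repWidth pac : ℝ) + 1) := by
        have := hp
        rcases max_cases (repWidth pb) (repWidth pac + 1) with ⟨he, _⟩ | ⟨he, _⟩ <;>
          rw [he] at this
        · exact le_trans (by exact_mod_cast this) (le_max_left _ _)
        · refine le_trans ?_ (le_max_right _ _)
          push_cast
          exact_mod_cast this
      refine le_trans hcast (max_le ?_ ?_)
      · refine le_trans hpb ?_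
        have hmono : Real.logb 2 (b.length : ℝ) ≤ Real.logb 2 (n : ℝ) := by
          refine (Real.logb_le_logb one_lt_two ?_ ?_).2 ?_
          · exact_mod_cast (by omega : 0 < b.length)
          · exact_mod_cast (by omega : 0 < n)
          · exact_mod_cast (by omega : b.length ≤ n)
        linarith
      · -- second branch
        have h16 : 16 * ((a ++ c).length) ≤ 13 * n := by rw [hacn]; omega
        have hX2 : (2:ℝ) ≤ ((a ++ c).length : ℝ) := by exact_mod_cast h2ac
        have hXn : 16 * ((a ++ c).length : ℝ) ≤ 13 * n := by exact_mod_cast h16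
        have hmono : Real.logb 2 ((a ++ c).length : ℝ)
            ≤ Real.logb 2 ((13/16 : ℝ) * n) := by
          refine (Real.logb_le_logb one_lt_two (by linarith) (by
            have : (0:ℝ) < n := by exact_mod_cast (by omega : 0 < n)
            positivity)).2 (by linarith)
        have hmul : Real.logb 2 ((13/16 : ℝ) * n)
            = Real.logb 2 ((13:ℝ)/16) + Real.logb 2 (n : ℝ) := by
          rw [Real.logb_mul (by norm_num) (by
            have : (0:ℝ) < n := by exact_mod_cast (by omega : 0 < n)
            linarith)]
        have hkey := logb_13_16
        linarith [hpac]


/-- There is a constant C > 0 (one may take C = 3) such that every Dyck word σ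
with |σ| ≥ 2 satisfies width(σ) ≤ C · log₂ |σ|. -/
theorem dyckWidth_le_log : ∃ C : ℝ, 0 < C ∧
    ∀ w : List ℤ, IsDyck w → 2 ≤ w.length →
      (dyckWidth w : ℝ) ≤ C * Real.logb 2 (w.length : ℝ) := by
  refine ⟨15, by norm_num, ?_⟩
  intro w hd hlen
  obtain ⟨p, hp⟩ := main_bound w.length w rfl hd hlen
  have h1 : dyckWidth w ≤ repWidth p := Nat.sInf_le ⟨p, rfl⟩
  calc (dyckWidth w : ℝ) ≤ (repWidth p : ℝ) := by exact_mod_cast h1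
    _ ≤ 15 * Real.logb 2 (w.length : ℝ) := hp
end

section
/- Let x_3, x_4, …, x_44 be arbitrary positive reals and define, for n ≥ 45, x_n = min_{15 ≤ q ≤ ⌊n/3⌋} (2n/q + 2·x_q). Then x_n = 2^{Θ(√(log₂ n))}; that is, there exist constants c₁, c₂, C₁, C₂ > 0 (depending only on the base values x_3,…,x_44) such that C₁ · 2^{c₁·√(log₂ n)} ≤ x_n ≤ C₂ · 2^{c₂·√(log₂ n)} for all n ≥ 45. -/
open Real

private lemma two_rpow_pos (r : ℝ) : (0:ℝ) < 2 ^ r := Real.rpow_pos_of_pos two_pos r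

private lemma two_rpow_mono {a b : ℝ} (h : a ≤ b) : (2:ℝ) ^ a ≤ 2 ^ b :=
  Real.rpow_le_rpow_of_exponent_le one_le_two h

private lemma exists_lb (x : ℕ → ℝ)
    (hpos : ∀ n, 3 ≤ n → n ≤ 44 → 0 < x n)
    (hrec : ∀ n : ℕ, 45 ≤ n →
      x n = sInf {v : ℝ | ∃ q : ℕ, 15 ≤ q ∧ q ≤ n / 3 ∧
        v = 2 * (n : ℝ) / (q : ℝ) + 2 * x q}) :
    ∃ C : ℝ, 0 < C ∧ C ≤ 1 ∧
      ∀ n : ℕ, 15 ≤ n → C * 2 ^ Real.sqrt (Real.logb 2 (n : ℝ)) ≤ x n := by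
  have hne : (Finset.Icc 15 44).Nonempty := ⟨15, by simp⟩
  set M : ℝ := (Finset.Icc 15 44).inf' hne x with hM
  have hMpos : 0 < M := by
    rw [hM, Finset.lt_inf'_iff]
    intro q hq
    simp only [Finset.mem_Icc] at hq
    exact hpos q (by omega) hq.2
  set C : ℝ := min (M / 8) 1 with hC
  have hCpos : 0 < C := by positivity
  have hC1 : C ≤ 1 := min_le_right _ _
  refine ⟨C, hCpos, hC1, ?_⟩
  intro n
  induction n using Nat.strong_induction_on with
  | _ n ih =>
    intro hn
    have npos : (0:ℝ) < n := by exact_mod_cast (by omega : 0 < n)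
    by_cases h44 : n ≤ 44
    · -- base case 15 ≤ n ≤ 44
      have hMn : M ≤ x n := Finset.inf'_le x (by simp [Finset.mem_Icc]; omega)
      have hlog : Real.logb 2 (n:ℝ) ≤ 6 := by
        rw [Real.logb_le_iff_le_rpow one_lt_two npos]
        have : ((2:ℝ) ^ ((6:ℕ):ℝ)) = 64 := by rw [Real.rpow_natCast]; norm_num
        rw [show ((6:ℝ)) = ((6:ℕ):ℝ) by norm_num, this]
        exact_mod_cast (by omega : n ≤ 64)
      have hsq : Real.sqrt (Real.logb 2 (n:ℝ)) ≤ 3 := by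
        have h9 : Real.sqrt 9 = 3 := by
          rw [show (9:ℝ) = 3 ^ 2 by norm_num, Real.sqrt_sq (by norm_num)]
        rw [← h9]
        exact Real.sqrt_le_sqrt (by linarith)
      have h8 : (2:ℝ) ^ Real.sqrt (Real.logb 2 (n:ℝ)) ≤ 8 := by
        have : (2:ℝ) ^ ((3:ℕ):ℝ) = 8 := by rw [Real.rpow_natCast]; norm_num
        calc (2:ℝ) ^ Real.sqrt (Real.logb 2 (n:ℝ)) ≤ 2 ^ ((3:ℕ):ℝ) :=
              two_rpow_mono (by push_cast; linarith)
          _ = 8 := this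
      have : C * 2 ^ Real.sqrt (Real.logb 2 (n:ℝ)) ≤ (M / 8) * 8 := by
        have := two_rpow_pos (Real.sqrt (Real.logb 2 (n:ℝ)))
        have hCM : C ≤ M / 8 := min_le_left _ _
        nlinarith
      linarith
    · -- inductive case n ≥ 45
      push_neg at h44
      rw [hrec n (by omega)]
      refine le_csInf ⟨2 * (n:ℝ) / 15 + 2 * x 15, ?_⟩ ?_
      · exact ⟨15, le_rfl, by omega, rfl⟩
      rintro v ⟨q, hq15, hq3, rfl⟩
      have hqn : q < n := by
        have : n / 3 < n := Nat.div_lt_self (by omega) (by omega)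
        omega
      have qpos : (0:ℝ) < q := by exact_mod_cast (by omega : 0 < q)
      have hxq := ih q hqn hq15
      set L := Real.logb 2 (n:ℝ) with hLdef
      set l := Real.logb 2 (q:ℝ) with hldef
      have hL0 : (0:ℝ) ≤ L := by
        rw [hLdef]
        apply Real.logb_nonneg one_lt_two
        exact_mod_cast (by omega : 1 ≤ n)
      have hl0 : (0:ℝ) ≤ l := by
        rw [hldef]
        apply Real.logb_nonneg one_lt_two
        exact_mod_cast (by omega : 1 ≤ q)
      have hL1 : (1:ℝ) ≤ Real.sqrt L := by
        apply Real.one_le_sqrt.mpr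
        rw [hLdef]
        calc (1:ℝ) = Real.logb 2 2 := (Real.logb_self_eq_one one_lt_two).symm
          _ ≤ _ := Real.logb_le_logb_of_le one_lt_two (by norm_num)
                (by exact_mod_cast (by omega : 2 ≤ n))
      have hdivpos : (0:ℝ) ≤ 2 * (n:ℝ) / q := by positivity
      by_cases hc : Real.sqrt L - 1 ≤ Real.sqrt l
      · -- large q: second term suffices
        have key : C * 2 ^ Real.sqrt L ≤ 2 * x q := by
          have h1 : C * 2 ^ Real.sqrt L = 2 * (C * 2 ^ (Real.sqrt L - 1)) := by
            rw [show Real.sqrt L = (Real.sqrt L - 1) + 1 by ring,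
              Real.rpow_add two_pos, Real.rpow_one]
            ring
          have h2 : (2:ℝ) ^ (Real.sqrt L - 1) ≤ 2 ^ Real.sqrt l := two_rpow_mono hc
          have h3 : C * 2 ^ Real.sqrt l ≤ x q := hxq
          nlinarith [two_rpow_pos (Real.sqrt L - 1)]
        linarith
      · -- small q: first term suffices
        push_neg at hc
        have hll : l ≤ L - Real.sqrt L := by
          nlinarith [Real.sq_sqrt hl0, Real.sq_sqrt hL0, Real.sqrt_nonneg l]
        have hn2 : (n:ℝ) = 2 ^ L := (Real.rpow_logb two_pos (by norm_num) npos).symm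
        have hq2 : (q:ℝ) = 2 ^ l := (Real.rpow_logb two_pos (by norm_num) qpos).symm
        have hxq0 : 0 ≤ x q := le_trans (by positivity) hxq
        have key : C * 2 ^ Real.sqrt L ≤ 2 * (n:ℝ) / q := by
          have h1 : (2:ℝ) ^ Real.sqrt L ≤ 2 ^ (L - l) := two_rpow_mono (by linarith)
          have h2 : 2 * (n:ℝ) / q = 2 * 2 ^ (L - l) := by
            rw [hn2, hq2, Real.rpow_sub two_pos]
            ring
          have := two_rpow_pos (Real.sqrt L)
          have := two_rpow_pos (L - l)
          nlinarith
        linarith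
set_option maxHeartbeats 1000000

private lemma two_rpow_pos' (r : ℝ) : (0:ℝ) < 2 ^ r := Real.rpow_pos_of_pos two_pos r

private lemma two_rpow_mono' {a b : ℝ} (h : a ≤ b) : (2:ℝ) ^ a ≤ 2 ^ b :=
  Real.rpow_le_rpow_of_exponent_le one_le_two h

private lemma exists_ub (x : ℕ → ℝ)
    (hpos : ∀ n, 3 ≤ n → n ≤ 44 → 0 < x n)
    (hrec : ∀ n : ℕ, 45 ≤ n →
      x n = sInf {v : ℝ | ∃ q : ℕ, 15 ≤ q ∧ q ≤ n / 3 ∧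
        v = 2 * (n : ℝ) / (q : ℝ) + 2 * x q})
    (hlb : ∀ q : ℕ, 15 ≤ q → 0 < x q) :
    ∃ C : ℝ, 0 < C ∧
      ∀ n : ℕ, 15 ≤ n → x n ≤ C * 2 ^ (8 * Real.sqrt (Real.logb 2 (n : ℝ))) := by
  have hne : (Finset.Icc 15 44).Nonempty := ⟨15, by simp⟩
  set M : ℝ := (Finset.Icc 15 44).sup' hne x with hM
  have hx15 : 0 < x 15 := hpos 15 (by norm_num) (by norm_num)
  have hMx : x 15 ≤ M := Finset.le_sup' x (by simp)
  set C : ℝ := M + 4 + 2 * x 15 with hC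
  have hC4 : 4 ≤ C := by linarith
  have hCx15 : 4 + 2 * x 15 ≤ C := by linarith
  have hCM : M ≤ C := by linarith
  refine ⟨C, by linarith, ?_⟩
  intro n
  induction n using Nat.strong_induction_on with
  | _ n ih =>
    intro hn
    have npos : (0:ℝ) < n := by exact_mod_cast (by omega : 0 < n)
    set L := Real.logb 2 (n:ℝ) with hLdef
    have hL0 : (0:ℝ) ≤ L := Real.logb_nonneg one_lt_two
      (by exact_mod_cast (by omega : 1 ≤ n))
    set Q : ℝ := 2 ^ (8 * Real.sqrt L) with hQ
    have hone : (1:ℝ) ≤ Q := by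
      rw [hQ]
      calc (1:ℝ) = 2 ^ (0:ℝ) := (Real.rpow_zero 2).symm
        _ ≤ _ := two_rpow_mono' (by positivity)
    by_cases h44 : n ≤ 44
    · -- base case
      have hxM : x n ≤ M := Finset.le_sup' x (by simp [Finset.mem_Icc]; omega)
      have hQ0 : (0:ℝ) < Q := lt_of_lt_of_le one_pos hone
      clear_value Q
      nlinarith
    · push_neg at h44
      -- n ≥ 45
      have hbdd : BddBelow {v : ℝ | ∃ q : ℕ, 15 ≤ q ∧ q ≤ n / 3 ∧
          v = 2 * (n : ℝ) / (q : ℝ) + 2 * x q} := by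
        refine ⟨0, ?_⟩
        rintro v ⟨q, hq15, hq3, rfl⟩
        have := hlb q hq15
        have qpos : (0:ℝ) < q := by exact_mod_cast (by omega : 0 < q)
        have : (0:ℝ) ≤ 2 * (n:ℝ) / q := by positivity
        linarith
      have hL4 : (4:ℝ) ≤ L := by
        have h16 : ((2:ℝ) ^ ((4:ℕ):ℝ)) = 16 := by rw [Real.rpow_natCast]; norm_num
        calc (4:ℝ) = Real.logb 2 ((2:ℝ) ^ ((4:ℕ):ℝ)) := by
              rw [Real.logb_rpow (by norm_num) (by norm_num)]; norm_num
          _ ≤ L := by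
              rw [h16]
              exact Real.logb_le_logb_of_le one_lt_two (by norm_num)
                (by exact_mod_cast (by omega : 16 ≤ n))
      have hsL : (2:ℝ) ≤ Real.sqrt L := by
        rw [show (2:ℝ) = Real.sqrt 4 by
          rw [show (4:ℝ) = 2 ^ 2 by norm_num, Real.sqrt_sq (by norm_num)]]
        exact Real.sqrt_le_sqrt hL4
      have hsLL : Real.sqrt L ≤ L := by
        nlinarith [Real.sq_sqrt hL0]
      have hn2 : (n:ℝ) = 2 ^ L := (Real.rpow_logb two_pos (by norm_num) npos).symm
      clear_value L
      set P : ℝ := 2 ^ Real.sqrt L with hP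
      have hPpos : (0:ℝ) < P := two_rpow_pos' _
      have h4sL : (4:ℝ) ≤ P := by
        have h4 : ((2:ℝ) ^ ((2:ℕ):ℝ)) = 4 := by rw [Real.rpow_natCast]; norm_num
        rw [hP, ← h4]; exact two_rpow_mono' (by push_cast; linarith)
      have hPQ : P ≤ Q := by
        rw [hP, hQ]; apply two_rpow_mono'; nlinarith [Real.sqrt_nonneg L]
      set y : ℝ := 2 ^ (L - Real.sqrt L) with hy
      have hypos : 0 < y := two_rpow_pos' _
      have hy1 : (1:ℝ) ≤ y := by
        rw [hy]
        calc (1:ℝ) = 2 ^ (0:ℝ) := (Real.rpow_zero 2).symm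
          _ ≤ _ := two_rpow_mono' (by linarith)
      have hny : (n:ℝ) = y * P := by
        rw [hy, hP, hn2, ← Real.rpow_add two_pos]
        ring_nf
      clear_value P Q y
      set q₀ : ℕ := ⌈y⌉₊ with hq₀
      have hyq : y ≤ q₀ := Nat.le_ceil y
      have hq₀y : (q₀:ℝ) < y + 1 := Nat.ceil_lt_add_one (by linarith)
      clear_value q₀
      by_cases h15 : q₀ ≤ 15
      · -- use q = 15
        have hy15 : y ≤ 15 := le_trans hyq (by exact_mod_cast h15)
        have hxle : x n ≤ 2 * (n:ℝ) / 15 + 2 * x 15 := by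
          rw [hrec n (by omega)]
          exact csInf_le hbdd ⟨15, le_rfl, by omega, rfl⟩
        have hterm : 2 * (n:ℝ) / 15 ≤ 2 * P := by
          rw [div_le_iff₀ (by norm_num), hny]
          nlinarith
        have hQ0 : (0:ℝ) < Q := lt_of_lt_of_le one_pos hone
        nlinarith
      · push_neg at h15
        have hy3 : (15:ℝ) ≤ y := by
          have : (16:ℝ) ≤ q₀ := by exact_mod_cast h15
          linarith
        have h4y : 4 * y ≤ (n:ℝ) := by
          rw [hny, mul_comm]
          exact mul_le_mul_of_nonneg_left h4sL hypos.le
        have h3q : q₀ * 3 ≤ n := by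
          have h : ((q₀ * 3 : ℕ):ℝ) ≤ (n:ℝ) := by push_cast; linarith
          exact_mod_cast h
        have hq15 : 15 ≤ q₀ := by omega
        have hqn : q₀ < n := by omega
        have q0pos : (0:ℝ) < q₀ := by exact_mod_cast (by omega : 0 < q₀)
        have hxle : x n ≤ 2 * (n:ℝ) / q₀ + 2 * x q₀ := by
          rw [hrec n (by omega)]
          exact csInf_le hbdd ⟨q₀, hq15, by omega, rfl⟩
        have hIH : x q₀ ≤ C * 2 ^ (8 * Real.sqrt (Real.logb 2 (q₀:ℝ))) :=
          ih q₀ hqn hq15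
        set l := Real.logb 2 (q₀:ℝ) with hldef
        have hl0 : (0:ℝ) ≤ l := Real.logb_nonneg one_lt_two
          (by exact_mod_cast (by omega : 1 ≤ q₀))
        have hlub : l ≤ L - Real.sqrt L + 1 := by
          have h2y : (q₀:ℝ) ≤ 2 ^ (L - Real.sqrt L + 1) := by
            rw [Real.rpow_add two_pos, Real.rpow_one, ← hy]
            linarith
          calc l ≤ Real.logb 2 ((2:ℝ) ^ (L - Real.sqrt L + 1)) := by
                rw [hldef]
                exact Real.logb_le_logb_of_le one_lt_two q0pos h2y
            _ = L - Real.sqrt L + 1 := Real.logb_rpow (by norm_num) (by norm_num)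
        clear_value l
        have hsl : Real.sqrt l ≤ Real.sqrt L - 1/4 := by
          have h1 : Real.sqrt l ≤ Real.sqrt ((Real.sqrt L - 1/4) ^ 2) := by
            apply Real.sqrt_le_sqrt
            nlinarith [Real.sq_sqrt hL0]
          rwa [Real.sqrt_sq (by linarith)] at h1
        have hterm1 : 2 * (n:ℝ) / q₀ ≤ 2 * P := by
          rw [div_le_iff₀ q0pos, hny]
          nlinarith
        set R : ℝ := 2 ^ (8 * Real.sqrt l) with hR
        have hRpos : (0:ℝ) < R := two_rpow_pos' _
        have hRQ : 4 * R ≤ Q := by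
          have h1 : R ≤ 2 ^ (8 * Real.sqrt L - 2) := by
            rw [hR]; apply two_rpow_mono'; linarith
          have h2 : (4:ℝ) * 2 ^ (8 * Real.sqrt L - 2) = Q := by
            rw [hQ, Real.rpow_sub two_pos,
              show ((2:ℝ) ^ (2:ℝ)) = 4 by
                rw [show (2:ℝ) = ((2:ℕ):ℝ) from by norm_num]
                rw [Real.rpow_natCast]; norm_num]
            ring
          linarith
        have hIH' : x q₀ ≤ C * R := hIH
        have hQ0 : (0:ℝ) < Q := lt_of_lt_of_le one_pos hone
        clear_value R
        nlinarith [mul_le_mul_of_nonneg_left hRQ (by linarith : (0:ℝ) ≤ C)]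

/-- Let x₃,…,x₄₄ be arbitrary positive reals and, for n ≥ 45, let
xₙ = min_{15 ≤ q ≤ ⌊n/3⌋} (2n/q + 2·x_q). Then xₙ = 2^{Θ(√(log₂ n))}. -/
theorem recurrence_solution (x : ℕ → ℝ)
    (hpos : ∀ n, 3 ≤ n → n ≤ 44 → 0 < x n)
    (hrec : ∀ n : ℕ, 45 ≤ n →
      x n = sInf {v : ℝ | ∃ q : ℕ, 15 ≤ q ∧ q ≤ n / 3 ∧
        v = 2 * (n : ℝ) / (q : ℝ) + 2 * x q}) :
    ∃ c₁ c₂ C₁ C₂ : ℝ, 0 < c₁ ∧ 0 < c₂ ∧ 0 < C₁ ∧ 0 < C₂ ∧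
      ∀ n : ℕ, 45 ≤ n →
        C₁ * 2 ^ (c₁ * Real.sqrt (Real.logb 2 (n : ℝ))) ≤ x n ∧
        x n ≤ C₂ * 2 ^ (c₂ * Real.sqrt (Real.logb 2 (n : ℝ))) := by
  obtain ⟨C₁, hC₁0, hC₁1, hLB⟩ := exists_lb x hpos hrec
  have hlbpos : ∀ q, 15 ≤ q → 0 < x q := fun q hq =>
    lt_of_lt_of_le (mul_pos hC₁0 (two_rpow_pos _)) (hLB q hq)
  obtain ⟨C₂, hC₂0, hUB⟩ := exists_ub x hpos hrec hlbpos
  refine ⟨1, 8, C₁, C₂, one_pos, by norm_num, hC₁0, hC₂0, ?_⟩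
  intro n hn
  constructor
  · have h := hLB n (by omega)
    rwa [one_mul]
  · exact hUB n (by omega)
end

section
/- For all positive integers a_0,…,a_{k−1}, the maximum height of a position in the word X(a_0,…,a_{k−1}) equals a_0 + a_1 + … + a_{k−1}; moreover, every nonempty factor of X(a_0,…,a_{k−1}) that is not a prefix has height increase Δ strictly smaller than a_0 + a_1 + … + a_{k−1}. -/
/-- X(a₀) = +^{a₀} −^{a₀};
X(a₀,…,a_{k+1}) = +^{a_{k+1}} X(a₀,…,a_k) X(a₀,…,a_k) −^{a_{k+1}}. -/
def Xword (a : ℕ → ℕ) : ℕ → List ℤ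
  | 0 => List.replicate (a 0) 1 ++ List.replicate (a 0) (-1)
  | k + 1 => List.replicate (a (k + 1)) 1 ++ Xword a k ++ Xword a k
      ++ List.replicate (a (k + 1)) (-1)

/-- Y(m,ℓ) = X(a₀,…,a_{mℓ−1}) with aᵢ = 2^{⌊i/ℓ⌋}. -/
def Yword (m ℓ : ℕ) : List ℤ := Xword (fun i => 2 ^ (i / ℓ)) (m * ℓ - 1)

lemma take_sum_append (l₁ l₂ : List ℤ) (i : ℕ) :
    ((l₁ ++ l₂).take i).sum = (l₁.take i).sum + (l₂.take (i - l₁.length)).sum := by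
  rw [List.take_append, List.sum_append]

lemma take_sum_rep (n i : ℕ) (c : ℤ) :
    ((List.replicate n c).take i).sum = ((min i n : ℕ) : ℤ) * c := by
  rw [List.take_replicate, List.sum_replicate, nsmul_eq_mul]

lemma Xword_sum (a : ℕ → ℕ) : ∀ k, (Xword a k).sum = 0
  | 0 => by
    simp [Xword, List.sum_append, List.sum_replicate]
  | k + 1 => by
    simp [Xword, List.sum_append, List.sum_replicate, Xword_sum a k]

lemma Xword_aux (a : ℕ → ℕ) : ∀ k, (∀ i ≤ k, 0 < a i) →
    (∀ i : ℕ, ((Xword a k).take i).sum ≤ (((Finset.range (k + 1)).sum a : ℕ) : ℤ)) ∧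
    (∃ i : ℕ, ((Xword a k).take i).sum = (((Finset.range (k + 1)).sum a : ℕ) : ℤ)) ∧
    (∀ i : ℕ, 0 < i → i < (Xword a k).length → 1 ≤ ((Xword a k).take i).sum) := by
  intro k
  induction k with
  | zero =>
    intro ha
    have h0 : 0 < a 0 := ha 0 le_rfl
    have hS : (((Finset.range 1).sum a : ℕ) : ℤ) = (a 0 : ℤ) := by
      simp
    have hlen : (Xword a 0).length = a 0 + a 0 := by
      simp [Xword]
    have hform : ∀ i, ((Xword a 0).take i).sum
        = ((min i (a 0) : ℕ) : ℤ) - ((min (i - a 0) (a 0) : ℕ) : ℤ) := by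
      intro i
      show (((List.replicate (a 0) (1:ℤ) ++ List.replicate (a 0) (-1)).take i).sum) = _
      rw [take_sum_append, take_sum_rep, take_sum_rep, List.length_replicate]
      ring
    refine ⟨fun i => ?_, ⟨a 0, ?_⟩, fun i hi hil => ?_⟩
    · rw [hform, hS]
      have h1 : min i (a 0) ≤ a 0 := min_le_right _ _
      have h2 : (0:ℤ) ≤ ((min (i - a 0) (a 0) : ℕ) : ℤ) := Int.natCast_nonneg _
      have : ((min i (a 0) : ℕ) : ℤ) ≤ ((a 0 : ℕ) : ℤ) := by exact_mod_cast h1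
      linarith
    · rw [hform, hS]
      simp
    · rw [hform]
      rw [hlen] at hil
      rcases le_or_gt i (a 0) with h | h
      · have e1 : min i (a 0) = i := min_eq_left h
        have e2 : i - a 0 = 0 := by omega
        rw [e1, e2]
        simp
        omega
      · have e1 : min i (a 0) = a 0 := min_eq_right h.le
        have e2 : min (i - a 0) (a 0) = i - a 0 := by omega
        rw [e1, e2]
        have : i - a 0 < a 0 := by omega
        have : ((i - a 0 : ℕ) : ℤ) < (a 0 : ℤ) := by exact_mod_cast this
        linarith
  | succ k ih =>
    intro ha
    obtain ⟨hA, ⟨j, hj⟩, hE⟩ := ih (fun i hi => ha i (hi.trans (Nat.le_succ k)))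
    set X := Xword a k with hX
    set L := X.length with hL
    set n := a (k + 1) with hn
    have hn0 : 0 < n := ha (k + 1) le_rfl
    have hXsum : X.sum = 0 := Xword_sum a k
    set Sk : ℤ := (((Finset.range (k + 1)).sum a : ℕ) : ℤ) with hSk
    have hSsucc : (((Finset.range (k + 2)).sum a : ℕ) : ℤ) = Sk + (n : ℤ) := by
      rw [hSk, hn, Finset.sum_range_succ]
      push_cast
      ring
    have hSk1 : 1 ≤ Sk := by
      have h : 0 < (Finset.range (k + 1)).sum a :=
        Finset.sum_pos (fun i hi => ha i (by have := Finset.mem_range.mp hi; omega))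
          ⟨0, by simp⟩
      rw [hSk]
      exact_mod_cast h
    -- nonnegativity of prefix sums of X
    have hQ0 : ∀ t, 0 ≤ (X.take t).sum := by
      intro t
      rcases Nat.eq_zero_or_pos t with rfl | ht
      · simp
      rcases lt_or_ge t L with h | h
      · linarith [hE t ht h]
      · rw [List.take_of_length_le (by omega)]
        rw [hXsum]
    have hlen : (Xword a (k+1)).length = n + L + L + n := by
      show (List.replicate n (1:ℤ) ++ X ++ X ++ List.replicate n (-1)).length = _
      simp [hL]
      omega
    have hform : ∀ i, ((Xword a (k+1)).take i).sum
        = ((min i n : ℕ) : ℤ) + (X.take (i - n)).sum + (X.take (i - n - L)).sum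
          - ((min (i - n - L - L) n : ℕ) : ℤ) := by
      intro i
      show ((List.replicate n (1:ℤ) ++ X ++ X ++ List.replicate n (-1)).take i).sum = _
      rw [take_sum_append, take_sum_append, take_sum_append, take_sum_rep, take_sum_rep]
      simp only [List.length_append, List.length_replicate, ← hL]
      have e1 : i - (n + L) = i - n - L := by omega
      have e2 : i - (n + L + L) = i - n - L - L := by omega
      rw [e1, e2]
      ring
    refine ⟨fun i => ?_, ⟨n + j, ?_⟩, fun i hi hil => ?_⟩
    · rw [hform, hSsucc]
      have hmn : ((min i n : ℕ) : ℤ) ≤ (n : ℤ) := by exact_mod_cast min_le_right i n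
      have hm0 : (0:ℤ) ≤ ((min (i - n - L - L) n : ℕ) : ℤ) := Int.natCast_nonneg _
      rcases le_or_gt (i - n) L with h | h
      · have e : i - n - L = 0 := by omega
        rw [e]
        simp only [List.take_zero, List.sum_nil]
        have := hA (i - n)
        linarith
      · have e : X.take (i - n) = X := List.take_of_length_le (by omega)
        rw [e, hXsum]
        have := hA (i - n - L)
        linarith
    · -- witness
      have hjL : j ≤ L := by
        by_contra hc
        push_neg at hc
        rw [List.take_of_length_le (by omega), hXsum] at hj
        linarith
      rw [hform, hSsucc]
      have e1 : min (n + j) n = n := by omega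
      have e2 : n + j - n = j := by omega
      have e3 : j - L = 0 := by omega
      rw [e1, e2, e3]
      have e4 : (0 - L) ⊓ n = 0 := by omega
      rw [e4]
      simp [hj]
      ring
    · rw [hform]
      rw [hlen] at hil
      have hm0 : (0:ℤ) ≤ ((min (i - n - L - L) n : ℕ) : ℤ) := Int.natCast_nonneg _
      rcases le_or_gt i n with h | h
      · have e1 : min i n = i := min_eq_left h
        have e2 : i - n = 0 := by omega
        rw [e1, e2]
        have e3 : (0:ℕ) - L = 0 := by omega
        rw [e3]
        have e4 : ((0:ℕ) - L) ⊓ n = 0 := by omega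
        rw [e4]
        have : (1:ℤ) ≤ (i:ℤ) := by exact_mod_cast hi
        simp
        linarith
      · have e1 : min i n = n := min_eq_right h.le
        rw [e1]
        have hn1 : (1:ℤ) ≤ (n:ℤ) := by exact_mod_cast hn0
        rcases le_or_gt i (n + L + L) with h2 | h2
        · have e4 : min (i - n - L - L) n = 0 := by omega
          rw [e4]
          have := hQ0 (i - n)
          have := hQ0 (i - n - L)
          push_cast
          linarith
        · have e2 : X.take (i - n) = X := List.take_of_length_le (by omega)
          have e3 : X.take (i - n - L) = X := List.take_of_length_le (by omega)
          rw [e2, e3, hXsum]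
          have e4 : min (i - n - L - L) n = i - n - L - L := by omega
          rw [e4]
          have : i - n - L - L < n := by omega
          have : ((i - n - L - L : ℕ) : ℤ) < (n : ℤ) := by exact_mod_cast this
          linarith

/-- The maximum height of a position in X(a₀,…,a_k) equals a₀ + … + a_k, and
every nonempty factor which is not a prefix has height increase strictly
smaller than a₀ + … + a_k. (The height increase of a factor v equals v.sum.) -/
theorem Xword_height (k : ℕ) (a : ℕ → ℕ) (ha : ∀ i ≤ k, 0 < a i) :
    (∀ i : ℕ, ((Xword a k).take i).sum ≤ (((Finset.range (k + 1)).sum a : ℕ) : ℤ)) ∧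
    (∃ i : ℕ, ((Xword a k).take i).sum = (((Finset.range (k + 1)).sum a : ℕ) : ℤ)) ∧
    (∀ u v z : List ℤ, Xword a k = u ++ v ++ z → u ≠ [] → v ≠ [] →
      v.sum < (((Finset.range (k + 1)).sum a : ℕ) : ℤ)) := by
  obtain ⟨hA, hB, hE⟩ := Xword_aux a k ha
  refine ⟨hA, hB, fun u v z hW hu hv => ?_⟩
  have h1 : (Xword a k).take u.length = u := by
    rw [hW, List.append_assoc, List.take_left]
  have h2 : ((Xword a k).take (u.length + v.length)).sum = u.sum + v.sum := by
    rw [hW, ← List.length_append, List.take_left, List.sum_append]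
  have hlen : (Xword a k).length = u.length + v.length + z.length := by
    rw [hW]; simp; omega
  have hu0 : 0 < u.length := List.length_pos_iff.mpr hu
  have hv0 : 0 < v.length := List.length_pos_iff.mpr hv
  have hB1 : 1 ≤ ((Xword a k).take u.length).sum := hE u.length hu0 (by omega)
  rw [h1] at hB1
  have hT : ((Xword a k).take (u.length + v.length)).sum
      ≤ (((Finset.range (k + 1)).sum a : ℕ) : ℤ) := hA _
  rw [h2] at hT
  linarith
end

section
/- For all positive integers a_0,…,a_{k−1}: (i) the suffix of X(a_0,…,a_{k−1}) of length a_0 + … + a_{k−1} consists of −1's only; (ii) if −^x occurs as a factor of X(a_0,…,a_{k−1}) and s ≤ k−1 satisfies a_0 + a_1 + … + a_s ≤ x, then this occurrence of −^x can be extended leftwards to an occurrence of a word of the form X(a_0,…,a_s)·−^r for some r ≥ 0 (i.e., the occurrence of −^x is a suffix of an occurrence of X(a_0,…,a_s)·−^r ending at the same position). -/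
private lemma split3 {P Q u w z : List ℤ} (h : P ++ Q = u ++ w ++ z) :
    (∃ z', P = u ++ w ++ z' ∧ z = z' ++ Q) ∨
    (∃ u', u = P ++ u' ∧ Q = u' ++ w ++ z) ∨
    (∃ w₁ w₂, w = w₁ ++ w₂ ∧ P = u ++ w₁ ∧ Q = w₂ ++ z) := by
  rw [List.append_assoc] at h
  rcases List.append_eq_append_iff.mp h with ⟨c, hc1, hc2⟩ | ⟨c, hc1, hc2⟩
  · exact Or.inr (Or.inl ⟨c, hc1, by rw [hc2, ← List.append_assoc]⟩)
  · rcases List.append_eq_append_iff.mp hc2 with ⟨d, hd1, hd2⟩ | ⟨d, hd1, hd2⟩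
    · refine Or.inl ⟨d, ?_, hd2⟩
      rw [hc1, hd1, List.append_assoc]
    · exact Or.inr (Or.inr ⟨c, d, hd1, hc1, hd2⟩)

private lemma rep_split {x : ℕ} {c : ℤ} {w₁ w₂ : List ℤ}
    (h : List.replicate x c = w₁ ++ w₂) :
    w₁ = List.replicate w₁.length c ∧ w₂ = List.replicate w₂.length c := by
  constructor
  · rw [List.eq_replicate_iff]
    exact ⟨rfl, fun b hb => List.eq_of_mem_replicate (h ▸ (List.mem_append.mpr (Or.inl hb)))⟩
  · rw [List.eq_replicate_iff]
    exact ⟨rfl, fun b hb => List.eq_of_mem_replicate (h ▸ (List.mem_append.mpr (Or.inr hb)))⟩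

private lemma ones_no_neg {n x : ℕ} {u z : List ℤ}
    (h : List.replicate n (1:ℤ) = u ++ List.replicate x (-1) ++ z) : x = 0 := by
  rcases Nat.eq_zero_or_pos x with h0 | hx
  · exact h0
  · exfalso
    have hm : (-1:ℤ) ∈ List.replicate n (1:ℤ) := by
      rw [h]
      exact List.mem_append.mpr (Or.inl (List.mem_append.mpr
        (Or.inr (List.mem_replicate.mpr ⟨hx.ne', rfl⟩))))
    have := List.eq_of_mem_replicate hm
    norm_num at this

private lemma split_plus {n x : ℕ} {Q u z : List ℤ}
    (h : List.replicate n (1:ℤ) ++ Q = u ++ List.replicate x (-1) ++ z) (hx : 0 < x) :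
    ∃ u', u = List.replicate n (1:ℤ) ++ u' ∧ Q = u' ++ List.replicate x (-1) ++ z := by
  rcases split3 h with ⟨z', h1, _⟩ | ⟨u', h1, h2⟩ | ⟨w₁, w₂, hw, h1, h2⟩
  · exact absurd (ones_no_neg h1) hx.ne'
  · exact ⟨u', h1, h2⟩
  · obtain ⟨e1, e2⟩ := rep_split hw
    have h0 : w₁.length = 0 := by
      apply ones_no_neg (u := u) (z := [])
      rw [List.append_nil, ← e1]; exact h1
    have hw1 : w₁ = [] := List.length_eq_zero_iff.mp h0
    subst hw1
    have hw2 : w₂ = List.replicate x (-1) := by simpa using hw.symm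
    refine ⟨[], by simpa using h1.symm, ?_⟩
    rw [List.nil_append, h2, hw2]

private lemma split_before_one {x : ℕ} {P Q u z t : List ℤ}
    (hQ : Q = 1 :: t)
    (h : P ++ Q = u ++ List.replicate x (-1) ++ z) :
    (∃ z', P = u ++ List.replicate x (-1) ++ z' ∧ z = z' ++ Q) ∨
    (∃ u', u = P ++ u' ∧ Q = u' ++ List.replicate x (-1) ++ z) := by
  rcases split3 h with c1 | c2 | ⟨w₁, w₂, hw, h1, h2⟩
  · exact Or.inl c1
  · exact Or.inr c2
  · obtain ⟨e1, e2⟩ := rep_split hw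
    rcases Nat.eq_zero_or_pos w₂.length with h0 | hpos
    · have hw2 : w₂ = [] := List.length_eq_zero_iff.mp h0
      subst hw2
      rw [List.append_nil] at hw
      left
      refine ⟨[], by rw [List.append_nil, h1, hw], ?_⟩
      simp only [List.nil_append] at h2 ⊢
      exact h2.symm
    · exfalso
      obtain ⟨m, hm⟩ := Nat.exists_eq_succ_of_ne_zero hpos.ne'
      rw [e2, hm, List.replicate_succ, List.cons_append, hQ] at h2
      injection h2 with hh _
      norm_num at hh

private lemma Xword_succ_assoc (a : ℕ → ℕ) (k : ℕ) :
    Xword a (k+1) = List.replicate (a (k+1)) 1 ++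
      (Xword a k ++ (Xword a k ++ List.replicate (a (k+1)) (-1))) := by
  simp [Xword, List.append_assoc]

private lemma Xword_head (a : ℕ → ℕ) : ∀ k, 0 < a k → ∃ t, Xword a k = 1 :: t := by
  intro k hk
  obtain ⟨n, hn⟩ := Nat.exists_eq_succ_of_ne_zero hk.ne'
  cases k with
  | zero => exact ⟨List.replicate n 1 ++ List.replicate (a 0) (-1),
      by rw [Xword, hn, List.replicate_succ, List.cons_append]⟩
  | succ k => exact ⟨List.replicate n 1 ++ Xword a k ++ Xword a k
        ++ List.replicate (a (k+1)) (-1),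
      by rw [Xword, hn, List.replicate_succ]; simp⟩

private lemma sum_pos' (a : ℕ → ℕ) (k : ℕ) (ha : 0 < a 0) :
    0 < (Finset.range (k+1)).sum a :=
  lt_of_lt_of_le ha (Finset.single_le_sum (fun i _ => Nat.zero_le _)
    (Finset.mem_range.mpr (Nat.succ_pos k)))

private lemma Xword_suffix (a : ℕ → ℕ) : ∀ k, (∀ i ≤ k, 0 < a i) →
    ∃ p : List ℤ, Xword a k
      = p ++ 1 :: List.replicate ((Finset.range (k+1)).sum a) (-1) := by
  intro k
  induction k with
  | zero =>
    intro ha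
    obtain ⟨n, hn⟩ := Nat.exists_eq_succ_of_ne_zero (ha 0 le_rfl).ne'
    refine ⟨List.replicate n 1, ?_⟩
    rw [Finset.sum_range_one]
    simp only [Xword]
    rw [hn, List.replicate_succ']
    simp
  | succ k ih =>
    intro ha
    obtain ⟨p, hp⟩ := ih (fun i hi => ha i (hi.trans (Nat.le_succ k)))
    refine ⟨List.replicate (a (k+1)) 1 ++ Xword a k ++ p, ?_⟩
    rw [Finset.sum_range_succ, List.replicate_add]
    simp only [Xword]
    rw [hp]
    simp [List.append_assoc]

private lemma Xword_contains (a : ℕ → ℕ) : ∀ k s, s ≤ k →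
    ∃ (q : List ℤ) (m : ℕ),
      Xword a k = q ++ Xword a s ++ List.replicate m (-1) ∧
      m + (Finset.range (s+1)).sum a = (Finset.range (k+1)).sum a := by
  intro k
  induction k with
  | zero =>
    intro s hs
    have : s = 0 := Nat.le_zero.mp hs
    subst this
    exact ⟨[], 0, by simp, by simp⟩
  | succ k ih =>
    intro s hs
    rcases Nat.lt_or_ge s (k+1) with h | h
    · obtain ⟨q, m, hq, hm⟩ := ih s (Nat.lt_succ_iff.mp h)
      refine ⟨List.replicate (a (k+1)) 1 ++ Xword a k ++ q, m + a (k+1), ?_, ?_⟩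
      · rw [List.replicate_add]
        simp only [Xword]
        rw [hq]
        simp [List.append_assoc]
      · have h2 : (Finset.range (k+1+1)).sum a = (Finset.range (k+1)).sum a + a (k+1) :=
          Finset.sum_range_succ a (k+1)
        omega
    · have : s = k+1 := le_antisymm hs h
      subst this
      exact ⟨[], 0, by simp, by simp⟩

private lemma Xword_maxrun (a : ℕ → ℕ) : ∀ k, (∀ i ≤ k, 0 < a i) →
    ∀ (u z : List ℤ) (x : ℕ), Xword a k = u ++ List.replicate x (-1) ++ z →
      x ≤ (Finset.range (k+1)).sum a := by
  intro k
  induction k with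
  | zero =>
    intro _ u z x h
    rw [Finset.sum_range_one]
    simp only [Xword] at h
    rcases split3 h with ⟨z', h1, _⟩ | ⟨u', _, h2⟩ | ⟨w₁, w₂, hw, h1, h2⟩
    · rw [ones_no_neg h1]; exact Nat.zero_le _
    · have := congrArg List.length h2
      simp at this
      omega
    · have hx1 : w₁.length = 0 := by
        apply ones_no_neg (n := a 0) (u := u) (z := ([] : List ℤ))
        rw [List.append_nil, ← (rep_split hw).1]
        exact h1
      have l2 := congrArg List.length h2
      have lw := congrArg List.length hw
      simp at l2 lw
      omega
  | succ k ih =>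
    intro ha u z x h
    have ha' : ∀ i ≤ k, 0 < a i := fun i hi => ha i (hi.trans (Nat.le_succ k))
    have hS : (Finset.range (k+1+1)).sum a = (Finset.range (k+1)).sum a + a (k+1) :=
      Finset.sum_range_succ a (k+1)
    rcases Nat.eq_zero_or_pos x with h0 | hx
    · rw [h0]; exact Nat.zero_le _
    rw [Xword_succ_assoc] at h
    obtain ⟨u₁, hu₁, h1⟩ := split_plus h hx
    obtain ⟨t, ht⟩ := Xword_head a k (ha' k le_rfl)
    have hQhead : Xword a k ++ List.replicate (a (k+1)) (-1)
        = 1 :: (t ++ List.replicate (a (k+1)) (-1)) := by rw [ht]; simp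
    rcases split_before_one hQhead h1 with ⟨z₁, hA, _⟩ | ⟨u₂, hA, hB⟩
    · exact le_trans (ih ha' u₁ z₁ x hA) (by omega)
    · rcases split3 hB with ⟨z₂, hC, _⟩ | ⟨u₃, _, hD⟩ | ⟨w₁, w₂, hw, hC, hD⟩
      · exact le_trans (ih ha' u₂ z₂ x hC) (by omega)
      · have := congrArg List.length hD
        simp at this
        omega
      · have hx1 : w₁.length ≤ (Finset.range (k+1)).sum a := by
          apply ih ha' u₂ [] w₁.length
          rw [List.append_nil, ← (rep_split hw).1]
          exact hC
        have lD := congrArg List.length hD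
        have lw := congrArg List.length hw
        simp at lD lw
        omega

private lemma Xword_extend (a : ℕ → ℕ) : ∀ k, (∀ i ≤ k, 0 < a i) →
    ∀ (x : ℕ) (u z : List ℤ) (s : ℕ), s ≤ k →
      Xword a k = u ++ List.replicate x (-1) ++ z →
      (Finset.range (s + 1)).sum a ≤ x →
      ∃ (u' : List ℤ) (r : ℕ),
        Xword a k = u' ++ Xword a s ++ List.replicate r (-1) ++ z ∧
        u'.length + (Xword a s).length + r = u.length + x := by
  intro k
  induction k with
  | zero =>
    intro ha x u z s hs h hx
    have hs0 : s = 0 := Nat.le_zero.mp hs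
    subst hs0
    rw [Finset.sum_range_one] at hx
    have hx0 : 0 < x := lt_of_lt_of_le (ha 0 le_rfl) hx
    simp only [Xword] at h
    obtain ⟨u₁, hu, h1⟩ := split_plus h hx0
    have l1 := congrArg List.length h1
    simp only [List.length_append, List.length_replicate] at l1
    have hu₁ : u₁ = [] := List.length_eq_zero_iff.mp (by omega)
    have hz : z = [] := List.length_eq_zero_iff.mp (by omega)
    subst hu₁; subst hz
    refine ⟨[], 0, by simp, ?_⟩
    have lu := congrArg List.length hu
    have lX : (Xword a 0).length = a 0 + a 0 := by
      simp only [Xword, List.length_append, List.length_replicate]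
    simp only [List.length_append, List.length_replicate, List.length_nil] at lu ⊢
    omega
  | succ k ih =>
    intro ha x u z s hs h hx
    have ha' : ∀ i ≤ k, 0 < a i := fun i hi => ha i (hi.trans (Nat.le_succ k))
    have hS : (Finset.range (k+1+1)).sum a = (Finset.range (k+1)).sum a + a (k+1) :=
      Finset.sum_range_succ a (k+1)
    have hx0 : 0 < x := lt_of_lt_of_le (sum_pos' a s (ha 0 (Nat.zero_le _))) hx
    rw [Xword_succ_assoc] at h
    obtain ⟨u₁, hu, h1⟩ := split_plus h hx0
    obtain ⟨t, ht⟩ := Xword_head a k (ha' k le_rfl)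
    have hQhead : Xword a k ++ List.replicate (a (k+1)) (-1)
        = 1 :: (t ++ List.replicate (a (k+1)) (-1)) := by rw [ht]; simp
    have lu := congrArg List.length hu
    simp only [List.length_append, List.length_replicate] at lu
    rcases split_before_one hQhead h1 with ⟨z₁, hA, hB⟩ | ⟨u₂, hA, hB⟩
    · -- run inside the first copy of W
      rcases eq_or_lt_of_le hs with rfl | hlt
      · exfalso
        have hm := Xword_maxrun a k ha' u₁ z₁ x hA
        have hA1 := ha (k+1) le_rfl
        omega
      · have hsk : s ≤ k := Nat.lt_succ_iff.mp hlt
        obtain ⟨u', r, hE, hL⟩ := ih ha' x u₁ z₁ s hsk hA hx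
        refine ⟨List.replicate (a (k+1)) 1 ++ u', r, ?_, ?_⟩
        · have key : Xword a (k+1) = List.replicate (a (k+1)) 1 ++
              (u' ++ Xword a s ++ List.replicate r (-1) ++ z₁) ++ Xword a k
              ++ List.replicate (a (k+1)) (-1) := by
            rw [← hE]; simp [Xword]
          rw [key, hB]
          simp [List.append_assoc]
        · simp only [List.length_append, List.length_replicate]
          omega
    · -- run inside W ++ −^A (second copy region)
      have lA := congrArg List.length hA
      simp only [List.length_append, List.length_replicate] at lA
      rcases split3 hB with ⟨z₂, hC, hD⟩ | ⟨u₃, hC, hD⟩ | ⟨w₁, w₂, hw, hC, hD⟩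
      · -- run inside the second copy of W
        rcases eq_or_lt_of_le hs with rfl | hlt
        · exfalso
          have hm := Xword_maxrun a k ha' u₂ z₂ x hC
          have hA1 := ha (k+1) le_rfl
          omega
        · have hsk : s ≤ k := Nat.lt_succ_iff.mp hlt
          obtain ⟨u', r, hE, hL⟩ := ih ha' x u₂ z₂ s hsk hC hx
          refine ⟨List.replicate (a (k+1)) 1 ++ Xword a k ++ u', r, ?_, ?_⟩
          · have key : Xword a (k+1) = List.replicate (a (k+1)) 1 ++ Xword a k ++
                (u' ++ Xword a s ++ List.replicate r (-1) ++ z₂)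
                ++ List.replicate (a (k+1)) (-1) := by
              rw [← hE]; simp [Xword]
            rw [key, hD]
            simp [List.append_assoc]
          · simp only [List.length_append, List.length_replicate]
            omega
      · -- run inside the final −^A block
        have hD' := hD
        rw [List.append_assoc] at hD'
        have hu₃ := (rep_split hD').1
        have lD := congrArg List.length hD
        have lC := congrArg List.length hC
        simp only [List.length_append, List.length_replicate] at lD lC
        rcases eq_or_lt_of_le hs with rfl | hlt
        · exfalso
          have hSk := sum_pos' a k (ha 0 (Nat.zero_le _))
          omega
        · have hsk : s ≤ k := Nat.lt_succ_iff.mp hlt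
          obtain ⟨q, m, hq, hm⟩ := Xword_contains a k s hsk
          refine ⟨List.replicate (a (k+1)) 1 ++ Xword a k ++ q, m + u₃.length + x, ?_, ?_⟩
          · have key : Xword a (k+1) = List.replicate (a (k+1)) 1 ++ Xword a k ++
                (q ++ Xword a s ++ List.replicate m (-1))
                ++ List.replicate (a (k+1)) (-1) := by
              rw [← hq]; simp [Xword]
            have hr : List.replicate (m + u₃.length + x) (-1:ℤ)
                = List.replicate m (-1) ++ u₃ ++ List.replicate x (-1) := by
              rw [List.replicate_add, List.replicate_add, ← hu₃]
            rw [key, hD, hr]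
            simp [List.append_assoc]
          · have lq := congrArg List.length hq
            simp only [List.length_append, List.length_replicate] at lq ⊢
            omega
      · -- run spans the boundary between second W and final −^A
        obtain ⟨hw₁, hw₂⟩ := rep_split hw
        have lw := congrArg List.length hw
        have lD := congrArg List.length hD
        have lC := congrArg List.length hC
        simp only [List.length_append, List.length_replicate] at lw lD lC
        have hx1max : w₁.length ≤ (Finset.range (k+1)).sum a := by
          apply Xword_maxrun a k ha' u₂ ([] : List ℤ) w₁.length
          rw [List.append_nil, ← hw₁]; exact hC
        rcases eq_or_lt_of_le hs with rfl | hlt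
        · -- s = k+1 : the run must be the whole suffix
          have hz : z = [] := List.length_eq_zero_iff.mp (by omega)
          subst hz
          refine ⟨[], 0, by simp, ?_⟩
          have lX : (Xword a (k+1)).length
              = a (k+1) + (Xword a k).length + (Xword a k).length + a (k+1) := by
            simp only [Xword, List.length_append, List.length_replicate]
          simp only [List.length_nil, List.length_append, List.length_replicate]
          omega
        · have hsk : s ≤ k := Nat.lt_succ_iff.mp hlt
          obtain ⟨q, m, hq, hm⟩ := Xword_contains a k s hsk
          refine ⟨List.replicate (a (k+1)) 1 ++ Xword a k ++ q, m + w₂.length, ?_, ?_⟩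
          · have key : Xword a (k+1) = List.replicate (a (k+1)) 1 ++ Xword a k ++
                (q ++ Xword a s ++ List.replicate m (-1))
                ++ List.replicate (a (k+1)) (-1) := by
              rw [← hq]; simp [Xword]
            have hr : List.replicate (m + w₂.length) (-1:ℤ)
                = List.replicate m (-1) ++ w₂ := by
              rw [List.replicate_add, ← hw₂]
            rw [key, hD, hr]
            simp [List.append_assoc]
          · have lq := congrArg List.length hq
            simp only [List.length_append, List.length_replicate] at lq ⊢
            omega

/-- (i) The suffix of X(a₀,…,a_k) of length a₀ + … + a_k consists of −1's only;
(ii) every occurrence of −^x in X(a₀,…,a_k) with a₀ + … + a_s ≤ x (s ≤ k)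
extends leftwards to an occurrence of X(a₀,…,a_s)·−^r ending at the same
position. -/
theorem Xword_minus_runs (k : ℕ) (a : ℕ → ℕ) (ha : ∀ i ≤ k, 0 < a i) :
    ((Xword a k).drop ((Xword a k).length - (Finset.range (k + 1)).sum a)
        = List.replicate ((Finset.range (k + 1)).sum a) (-1)) ∧
    ∀ (x : ℕ) (u z : List ℤ) (s : ℕ), s ≤ k →
      Xword a k = u ++ List.replicate x (-1) ++ z →
      (Finset.range (s + 1)).sum a ≤ x →
      ∃ (u' : List ℤ) (r : ℕ),
        Xword a k = u' ++ Xword a s ++ List.replicate r (-1) ++ z ∧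
        u'.length + (Xword a s).length + r = u.length + x := by
  constructor
  · -- part (i)
    obtain ⟨p, hp⟩ := Xword_suffix a k ha
    have hp' : Xword a k = (p ++ [1]) ++
        List.replicate ((Finset.range (k+1)).sum a) (-1) := by
      rw [hp]; simp
    have hL : (Xword a k).length - (Finset.range (k+1)).sum a = (p ++ [1]).length := by
      rw [hp']
      simp only [List.length_append, List.length_replicate, List.length_cons,
        List.length_singleton]
      omega
    rw [hL, hp', List.drop_left]
  · -- part (ii)
    intro x u z s hs h hx
    exact Xword_extend a k ha x u z s hs h hx
end

section
/- For all integers ℓ ≥ 2, m ≥ 1 and all real x with x ≥ 6·H(Y(m,ℓ)) and x ≥ 9·6^ℓ, every factor w of Y(m,ℓ) with |w| ≥ x contains a sub-factor of the form −^d with d ≥ (ℓ/3)·(x/9)^{1/ℓ}. -/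
/-- Maximum height of a position in a word. -/
noncomputable def maxHeight (w : List ℤ) : ℤ :=
  ((Finset.range (w.length + 1)).image fun i => (w.take i).sum).max' (by simp)

namespace YP

variable (a : ℕ → ℕ)

def L (k : ℕ) : ℕ := (Xword a k).length

def Hs (k : ℕ) : ℕ := ∑ i ∈ Finset.range (k+1), a i

def del (j d : ℕ) : ℕ := ∑ i ∈ Finset.range d, a (j+1+i)

lemma L_zero : L a 0 = 2 * a 0 := by simp [L, Xword]; ring

lemma L_succ (k : ℕ) : L a (k+1) = 2 * a (k+1) + 2 * L a k := by
  simp [L, Xword]; ring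

lemma del_zero (j : ℕ) : del a j 0 = 0 := by simp [del]

lemma del_succ (j d : ℕ) : del a j (d+1) = del a j d + a (j+d+1) := by
  simp [del, Finset.sum_range_succ]
  congr 1
  omega

variable {a} (ha : ∀ i, 1 ≤ a i)
include ha

lemma L_pos (k : ℕ) : 1 ≤ L a k := by
  cases k with
  | zero => have := ha 0; simp [L_zero]; omega
  | succ k => have := ha (k+1); rw [L_succ]; omega

/-- prefix of ones -/
lemma prefix_ones (k : ℕ) : ∃ Q, Xword a k = List.replicate (Hs a k) 1 ++ Q := by
  induction k with
  | zero => exact ⟨List.replicate (a 0) (-1), by simp [Xword, Hs]⟩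
  | succ k ih =>
      obtain ⟨Q, hQ⟩ := ih
      refine ⟨Q ++ Xword a k ++ List.replicate (a (k+1)) (-1), ?_⟩
      have h1 : Hs a (k+1) = a (k+1) + Hs a k := by
        simp [Hs, Finset.sum_range_succ]; ring
      rw [Xword, hQ, h1, List.replicate_add]
      simp only [List.append_assoc]

/-- suffix of minus ones -/
lemma suffix_negs (k : ℕ) : ∃ P, Xword a k = P ++ List.replicate (Hs a k) (-1) := by
  induction k with
  | zero => exact ⟨List.replicate (a 0) 1, by simp [Xword, Hs]⟩
  | succ k ih =>
      obtain ⟨P, hP⟩ := ih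
      refine ⟨List.replicate (a (k+1)) 1 ++ Xword a k ++ P, ?_⟩
      have h1 : Hs a (k+1) = Hs a k + a (k+1) := by simp [Hs, Finset.sum_range_succ]
      rw [Xword, h1, List.replicate_add]
      conv_lhs => conv in (occs := 2) Xword a k => rw [hP]
      simp [List.append_assoc]

/-- J1: X_{j+d} = A ++ X_j ++ (-1)^{del j d} -/
lemma J1 (j d : ℕ) : ∃ A, Xword a (j+d) = A ++ Xword a j ++ List.replicate (del a j d) (-1) := by
  induction d with
  | zero => exact ⟨[], by simp [del_zero]⟩
  | succ d ih =>
      obtain ⟨A, hA⟩ := ih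
      refine ⟨List.replicate (a (j+d+1)) 1 ++ Xword a (j+d) ++ A, ?_⟩
      have hx : Xword a (j+(d+1)) = List.replicate (a (j+d+1)) 1 ++ Xword a (j+d) ++ Xword a (j+d)
          ++ List.replicate (a (j+d+1)) (-1) := by
        have h : j + (d+1) = (j+d) + 1 := by omega
        rw [h, Xword]
      rw [hx, del_succ, List.replicate_add]
      conv_lhs => conv in (occs := 2) Xword a (j+d) => rw [hA]
      simp [List.append_assoc]

/-- J2: X_{j+d} = 1^{del j d} ++ X_j ++ B -/
lemma J2 (j d : ℕ) : ∃ B, Xword a (j+d) = List.replicate (del a j d) 1 ++ Xword a j ++ B := by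
  induction d with
  | zero => exact ⟨[], by simp [del_zero]⟩
  | succ d ih =>
      obtain ⟨B, hB⟩ := ih
      refine ⟨B ++ Xword a (j+d) ++ List.replicate (a (j+d+1)) (-1), ?_⟩
      have hx : Xword a (j+(d+1)) = List.replicate (a (j+d+1)) 1 ++ Xword a (j+d) ++ Xword a (j+d)
          ++ List.replicate (a (j+d+1)) (-1) := by
        have h : j + (d+1) = (j+d) + 1 := by omega
        rw [h, Xword]
      rw [hx, del_succ,
        show del a j d + a (j+d+1) = a (j+d+1) + del a j d from Nat.add_comm _ _]
      simp only [hB, List.replicate_add, List.append_assoc]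

/-- main occurrence lemma -/
lemma occ (j : ℕ) : ∀ d s, s + 2 * L a j + 2 * del a j d ≤ L a (j + d) →
    ∃ u z : List ℤ, Xword a (j+d) = u ++ Xword a j ++ z ∧ s ≤ u.length ∧
      u.length + L a j ≤ s + 2 * L a j + 2 * del a j d := by
  intro d
  induction d with
  | zero =>
      intro s hs
      rw [del_zero] at hs
      simp only [Nat.add_zero] at hs
      have := L_pos ha j
      omega
  | succ d ih =>
      intro s hs
      have hLj : 1 ≤ L a j := L_pos ha j
      have hL1 : L a (j + (d+1)) = 2 * a (j+d+1) + 2 * L a (j+d) := by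
        have h : j + (d+1) = (j+d) + 1 := by omega
        rw [h, L_succ]
      have hdel : del a j (d+1) = del a j d + a (j+d+1) := del_succ a j d
      obtain ⟨A, hA⟩ := J1 ha j d
      have hAlen : A.length + L a j + del a j d = L a (j+d) := by
        have h := congrArg List.length hA
        simp only [List.length_append, List.length_replicate] at h
        simp only [L]
        omega
      have hxdef : Xword a (j+(d+1)) = List.replicate (a (j+d+1)) 1 ++ Xword a (j+d)
          ++ Xword a (j+d) ++ List.replicate (a (j+d+1)) (-1) := by
        have h : j + (d+1) = (j+d) + 1 := by omega
        rw [h, Xword]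
      rw [hdel] at hs ⊢
      rw [hL1] at hs
      have hLL1 : (Xword a j).length = L a j := rfl
      have hLL2 : (Xword a (j+d)).length = L a (j+d) := rfl
      by_cases h1 : a (j+d+1) ≤ s ∧ s + 2 * L a j + 2 * del a j d ≤ a (j+d+1) + L a (j+d)
      · obtain ⟨u1, z1, he, hl1, hl2⟩ := ih (s - a (j+d+1)) (by omega)
        have hel : u1.length + L a j + z1.length = L a (j+d) := by
          have h := congrArg List.length he
          simp only [List.length_append, hLL1, hLL2] at h
          omega
        refine ⟨List.replicate (a (j+d+1)) 1 ++ u1,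
          z1 ++ Xword a (j+d) ++ List.replicate (a (j+d+1)) (-1), ?_, ?_, ?_⟩
        · rw [hxdef]
          conv_lhs => conv in (occs := 1) Xword a (j+d) => rw [he]
          simp [List.append_assoc]
        · simp only [List.length_append, List.length_replicate]; omega
        · simp only [List.length_append, List.length_replicate]; omega
      · by_cases h2 : s < a (j+d+1) ∧ 2 * L a j + 2 * del a j d ≤ L a (j+d)
        · obtain ⟨u1, z1, he, hl1, hl2⟩ := ih 0 (by omega)
          refine ⟨List.replicate (a (j+d+1)) 1 ++ u1,
            z1 ++ Xword a (j+d) ++ List.replicate (a (j+d+1)) (-1), ?_, ?_, ?_⟩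
          · rw [hxdef]
            conv_lhs => conv in (occs := 1) Xword a (j+d) => rw [he]
            simp [List.append_assoc]
          · simp only [List.length_append, List.length_replicate]; omega
          · simp only [List.length_append, List.length_replicate]; omega
        · by_cases h3 : a (j+d+1) + L a (j+d) ≤ s
          · obtain ⟨u1, z1, he, hl1, hl2⟩ := ih (s - a (j+d+1) - L a (j+d)) (by omega)
            refine ⟨List.replicate (a (j+d+1)) 1 ++ Xword a (j+d) ++ u1,
              z1 ++ List.replicate (a (j+d+1)) (-1), ?_, ?_, ?_⟩
            · rw [hxdef]
              conv_lhs => conv in (occs := 2) Xword a (j+d) => rw [he]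
              simp [List.append_assoc]
            · simp only [List.length_append, List.length_replicate, hLL2]; omega
            · simp only [List.length_append, List.length_replicate, hLL2]; omega
          · by_cases h4 : s + L a j + del a j d ≤ a (j+d+1) + L a (j+d)
            · -- last occurrence of first copy
              refine ⟨List.replicate (a (j+d+1)) 1 ++ A,
                List.replicate (del a j d) (-1) ++ Xword a (j+d)
                  ++ List.replicate (a (j+d+1)) (-1), ?_, ?_, ?_⟩
              · rw [hxdef]
                conv_lhs => conv in (occs := 1) Xword a (j+d) => rw [hA]
                simp [List.append_assoc]
              · simp only [List.length_append, List.length_replicate]; omega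
              · simp only [List.length_append, List.length_replicate]; omega
            · -- first occurrence of second copy
              obtain ⟨B, hB⟩ := J2 ha j d
              refine ⟨List.replicate (a (j+d+1)) 1 ++ Xword a (j+d)
                  ++ List.replicate (del a j d) 1,
                B ++ List.replicate (a (j+d+1)) (-1), ?_, ?_, ?_⟩
              · rw [hxdef]
                conv_lhs => conv in (occs := 2) Xword a (j+d) => rw [hB]
                simp [List.append_assoc]
              · simp only [List.length_append, List.length_replicate, hLL2]; omega
              · simp only [List.length_append, List.length_replicate, hLL2]; omega

omit ha

lemma Hs_split (a : ℕ → ℕ) (j d : ℕ) : Hs a (j+d) = Hs a j + del a j d := by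
  simp only [Hs, del]
  rw [show j + d + 1 = (j+1) + d by omega, Finset.sum_range_add]

/-- extraction lemma -/
lemma extract {W w u z u' z' V : List ℤ} (h1 : W = u ++ w ++ z) (h2 : W = u' ++ V ++ z')
    (hsle : u.length ≤ u'.length) (hele : u'.length + V.length ≤ u.length + w.length) :
    ∃ p q, w = p ++ V ++ q := by
  set t := u'.length - u.length with ht
  have htw : t ≤ w.length := by omega
  have hd1 : W.drop u'.length = V ++ z' := by
    rw [h2]; simp [List.append_assoc]
  have hd2 : W.drop u'.length = w.drop t ++ z := by
    rw [h1]
    have h : u'.length = u.length + t := by omega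
    rw [h, List.append_assoc, List.drop_length_add_append, List.drop_append_of_le_length htw]
  have hVlen : V.length ≤ (w.drop t).length := by
    simp; omega
  have hV : V = (w.drop t).take V.length := by
    have h : (V ++ z').take V.length = (w.drop t ++ z).take V.length := by
      rw [← hd1, hd2]
    rw [List.take_append_of_le_length hVlen] at h
    simpa using h
  refine ⟨w.take t, (w.drop t).drop V.length, ?_⟩
  have hw2 : w.drop t = V ++ (w.drop t).drop V.length := by
    conv_lhs => rw [← List.take_append_drop V.length (w.drop t)]
    rw [← hV]
  conv_lhs => rw [← List.take_append_drop t w]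
  rw [List.append_assoc]
  exact congrArg _ hw2


section Specific

variable {ℓ : ℕ}

lemma aval (hl : 2 ≤ ℓ) (t r : ℕ) (hr : r < ℓ) : (t * ℓ + r) / ℓ = t := by
  rw [Nat.add_comm, Nat.add_mul_div_right _ _ (by omega : 0 < ℓ), Nat.div_eq_of_lt hr]
  omega

lemma sum_pow (hl : 2 ≤ ℓ) (t : ℕ) :
    ∑ i ∈ Finset.range (t * ℓ), 2 ^ (i / ℓ) = ℓ * (2 ^ t - 1) := by
  induction t with
  | zero => simp
  | succ t ih =>
      rw [show (t+1)*ℓ = t*ℓ + ℓ by ring, Finset.sum_range_add, ih]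
      have h1 : ∑ i ∈ Finset.range ℓ, 2 ^ ((t*ℓ + i) / ℓ) = ℓ * 2 ^ t := by
        rw [Finset.sum_congr rfl (fun i hi => by
          rw [aval hl t i (Finset.mem_range.1 hi)])]
        simp [Finset.sum_const, mul_comm]
      rw [h1]
      have h2 : 1 ≤ 2 ^ t := Nat.one_le_two_pow
      have h3 : 2 ^ (t+1) = 2 * 2 ^ t := by ring
      zify [h2, show (1:ℕ) ≤ 2^(t+1) from Nat.one_le_two_pow]
      push_cast [h3]
      ring

lemma Hs_eq (hl : 2 ≤ ℓ) (t : ℕ) (ht : 1 ≤ t) :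
    Hs (fun i => 2 ^ (i / ℓ)) (t * ℓ - 1) = ℓ * (2 ^ t - 1) := by
  have h1 : 1 ≤ t * ℓ := by
    calc 1 ≤ 1 * 2 := by norm_num
    _ ≤ t * ℓ := Nat.mul_le_mul ht hl
  rw [Hs, show t*ℓ - 1 + 1 = t*ℓ by omega]
  exact sum_pow hl t

lemma L0r (hl : 2 ≤ ℓ) : ∀ r, r < ℓ →
    L (fun i => 2 ^ (i / ℓ)) r + 2 = 2 ^ (r + 2) := by
  intro r
  induction r with
  | zero => intro _; rw [L_zero]; norm_num
  | succ r ih =>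
      intro hr
      rw [L_succ]
      have h1 : (r + 1) / ℓ = 0 := Nat.div_eq_of_lt hr
      have h2 := ih (by omega)
      have h3 : 2 ^ (r + 1 + 2) = 2 * 2 ^ (r + 2) := by ring
      rw [h1]
      omega

lemma Lblock (hl : 2 ≤ ℓ) (t : ℕ) (ht : 1 ≤ t) :
    ∀ r, r ≤ ℓ → L (fun i => 2 ^ (i / ℓ)) (t * ℓ - 1 + r) + 2 * 2 ^ t
      = 2 ^ r * L (fun i => 2 ^ (i / ℓ)) (t * ℓ - 1) + 2 ^ (r + 1) * 2 ^ t := by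
  have h1 : 1 ≤ t * ℓ := by
    calc 1 ≤ 1 * 2 := by norm_num
    _ ≤ t * ℓ := Nat.mul_le_mul ht hl
  intro r
  induction r with
  | zero => intro _; ring
  | succ r ih =>
      intro hr
      have ihr := ih (by omega)
      rw [show t*ℓ - 1 + (r+1) = (t*ℓ - 1 + r) + 1 by omega, L_succ]
      have hidx : (t*ℓ - 1 + r) + 1 = t * ℓ + r := by omega
      have hav : ((t*ℓ - 1 + r) + 1) / ℓ = t := by rw [hidx]; exact aval hl t r (by omega)
      rw [hav]
      have e1 : 2 ^ (r + 1) = 2 * 2 ^ r := by ring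
      have e2 : 2 ^ (r + 1 + 1) = 2 * 2 ^ (r + 1) := by ring
      rw [e1, e2]
      nlinarith [ihr]

lemma Lbound (hl : 2 ≤ ℓ) (t : ℕ) (ht : 1 ≤ t) :
    L (fun i => 2 ^ (i / ℓ)) (t * ℓ - 1) + 3 * 2 ^ t ≤ 3 * 2 ^ (t * ℓ) := by
  have hE : 4 ≤ 2 ^ ℓ := by
    calc (4:ℕ) = 2 ^ 2 := by norm_num
    _ ≤ 2 ^ ℓ := Nat.pow_le_pow_right (by norm_num) hl
  induction t, ht using Nat.le_induction with
  | base =>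
      have h1 := L0r hl (ℓ - 1) (by omega)
      have h2 : ℓ - 1 + 2 = ℓ + 1 := by omega
      rw [h2] at h1
      have h3 : 2 ^ (ℓ + 1) = 2 * 2 ^ ℓ := by ring
      rw [Nat.one_mul, Nat.pow_one]
      omega
  | succ t ht1 ih =>
      have ih1 := ih
      have hb := Lblock hl t ht1 ℓ le_rfl
      have hidx : t * ℓ - 1 + ℓ = (t+1) * ℓ - 1 := by
        have h4 : 1 ≤ t * ℓ := by
          calc 1 ≤ 1 * 2 := by norm_num
          _ ≤ t * ℓ := Nat.mul_le_mul ht1 hl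
        have h5 : (t+1)*ℓ = t*ℓ + ℓ := by ring
        omega
      rw [hidx] at hb
      have hkey : 2 ^ ℓ * (L (fun i => 2 ^ (i / ℓ)) (t * ℓ - 1) + 3 * 2 ^ t)
          ≤ 2 ^ ℓ * (3 * 2 ^ (t * ℓ)) := Nat.mul_le_mul_left _ ih1
      have e1 : 2 ^ (t + 1) = 2 * 2 ^ t := by ring
      have e2 : 2 ^ ((t+1) * ℓ) = 2 ^ ℓ * 2 ^ (t * ℓ) := by
        rw [← pow_add]; ring_nf
      have e3 : 2 ^ (ℓ + 1) = 2 * 2 ^ ℓ := by ring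
      rw [e1, e2]
      nlinarith [hb, hkey, hE, Nat.one_le_two_pow (n := t)]

end Specific

/-- max height at least the full ascent -/
lemma mh_ge {a : ℕ → ℕ} (ha : ∀ i, 1 ≤ a i) (k : ℕ) :
    (Hs a k : ℤ) ≤ maxHeight (Xword a k) := by
  obtain ⟨Q, hQ⟩ := prefix_ones ha k
  have hlen : Hs a k ≤ (Xword a k).length := by rw [hQ]; simp
  have htake : (Xword a k).take (Hs a k) = List.replicate (Hs a k) (1:ℤ) := by
    rw [hQ]
    exact List.take_left' (by simp)
  have hsum : ((Xword a k).take (Hs a k)).sum = (Hs a k : ℤ) := by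
    rw [htake]; simp
  have hmem : ((Xword a k).take (Hs a k)).sum ∈
      ((Finset.range ((Xword a k).length + 1)).image fun i => ((Xword a k).take i).sum) :=
    Finset.mem_image.2 ⟨Hs a k, Finset.mem_range.2 (Nat.lt_succ_of_le hlen), rfl⟩
  calc (Hs a k : ℤ) = ((Xword a k).take (Hs a k)).sum := hsum.symm
  _ ≤ maxHeight (Xword a k) := Finset.le_max' _ _ hmem

end YP

open YP


/-- For x ≥ 6·H(Y(m,ℓ)) and x ≥ 9·6^ℓ, every factor of Y(m,ℓ) of length ≥ x
contains a run −^d with d ≥ (ℓ/3)·(x/9)^{1/ℓ}. -/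
theorem Yword_phi (m ℓ : ℕ) (hℓ : 2 ≤ ℓ) (hm : 1 ≤ m) (x : ℝ)
    (hx1 : 6 * (maxHeight (Yword m ℓ) : ℝ) ≤ x) (hx2 : 9 * 6 ^ ℓ ≤ x)
    (u w z : List ℤ) (hfac : Yword m ℓ = u ++ w ++ z)
    (hlen : x ≤ (w.length : ℝ)) :
    ∃ (d : ℕ) (u' z' : List ℤ),
      ((ℓ : ℝ) / 3) * (x / 9) ^ ((1 : ℝ) / (ℓ : ℝ)) ≤ (d : ℝ) ∧
      w = u' ++ List.replicate d (-1) ++ z' := by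
  have ha : ∀ i, 1 ≤ (fun i => 2 ^ (i / ℓ)) i := fun i => Nat.one_le_two_pow
  set a : ℕ → ℕ := fun i => 2 ^ (i / ℓ) with ha_def
  have hY : Yword m ℓ = Xword a (m*ℓ - 1) := rfl
  rw [hY] at hfac
  have hx0 : (0:ℝ) < x := lt_of_lt_of_le (by positivity) hx2
  have hx9 : ((6:ℝ))^ℓ ≤ x/9 := by linarith
  set N := Nat.floor (x/9) with hN_def
  have hN6 : 6^ℓ ≤ N := Nat.le_floor (by push_cast; linarith)
  have hN2 : 2^ℓ ≤ N := le_trans (Nat.pow_le_pow_left (by norm_num) ℓ) hN6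
  have hN0 : N ≠ 0 := by have := Nat.one_le_two_pow (n := ℓ); omega
  set t := Nat.log 2 N / ℓ with ht_def
  have hℓ0 : 0 < ℓ := by omega
  have htℓ : t*ℓ ≤ Nat.log 2 N := Nat.div_mul_le_self _ _
  have hpow_le : 2^(t*ℓ) ≤ N :=
    le_trans (Nat.pow_le_pow_right (by norm_num) htℓ) (Nat.pow_log_le_self 2 hN0)
  have hlow : ((2:ℝ))^(t*ℓ) ≤ x/9 := by
    calc ((2:ℝ))^(t*ℓ) ≤ (N:ℝ) := by exact_mod_cast hpow_le
    _ ≤ x/9 := Nat.floor_le (by positivity)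
  have hlog_lt : Nat.log 2 N < (t+1)*ℓ := (Nat.div_lt_iff_lt_mul hℓ0).1 (Nat.lt_succ_self t)
  have hupN : N < 2^((t+1)*ℓ) :=
    lt_of_lt_of_le (Nat.lt_pow_succ_log_self (by norm_num) N)
      (Nat.pow_le_pow_right (by norm_num) hlog_lt)
  have hup : x/9 < ((2:ℝ))^((t+1)*ℓ) := by
    calc x/9 < (N:ℝ) + 1 := Nat.lt_floor_add_one _
    _ ≤ ((2:ℝ))^((t+1)*ℓ) := by exact_mod_cast hupN
  have ht1 : 1 ≤ t := by
    have hlog : ℓ ≤ Nat.log 2 N := (Nat.le_log_iff_pow_le (by norm_num) hN0).2 hN2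
    exact (Nat.one_le_div_iff hℓ0).2 hlog
  have hflen : L a (m*ℓ-1) = u.length + w.length + z.length := by
    have h := congrArg List.length hfac
    simp only [List.length_append] at h
    simpa [L] using h
  have hE4 : (4:ℕ) ≤ 2^ℓ := by
    calc (4:ℕ) = 2^2 := by norm_num
    _ ≤ 2^ℓ := Nat.pow_le_pow_right (by norm_num) hℓ
  have htm : t ≤ m := by
    by_contra hc
    push_neg at hc
    have h1 : (m+1)*ℓ ≤ t*ℓ := Nat.mul_le_mul_right _ (by omega)
    have h2 : 2^((m+1)*ℓ) ≤ N :=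
      le_trans (Nat.pow_le_pow_right (by norm_num) h1) hpow_le
    have h3 : (9*(N:ℝ)) ≤ x := by
      have hfl := Nat.floor_le (show (0:ℝ) ≤ x/9 by positivity)
      rw [← hN_def] at hfl
      linarith
    have h5 : 9*N ≤ w.length := by exact_mod_cast le_trans h3 hlen
    have h7 : L a (m*ℓ-1) + 3*2^m ≤ 3*2^(m*ℓ) := Lbound hℓ m hm
    have h8 : 4*2^(m*ℓ) ≤ 2^((m+1)*ℓ) := by
      have he : 2^((m+1)*ℓ) = 2^ℓ * 2^(m*ℓ) := by rw [← pow_add]; ring_nf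
      calc 4*2^(m*ℓ) ≤ 2^ℓ * 2^(m*ℓ) := Nat.mul_le_mul_right _ hE4
      _ = 2^((m+1)*ℓ) := he.symm
    omega
  set j := t*ℓ - 1 with hj_def
  set dd := (m - t)*ℓ with hdd_def
  have hjd : j + dd = m*ℓ - 1 := by
    have h1 : t*ℓ + (m-t)*ℓ = m*ℓ := by rw [← Nat.add_mul, Nat.add_sub_cancel' htm]
    have h2 : 1 ≤ t*ℓ := by
      calc 1 ≤ 1*2 := by norm_num
      _ ≤ t*ℓ := Nat.mul_le_mul ht1 hℓ
    omega
  have hHs_mh : ((Hs a (m*ℓ-1) : ℕ) : ℝ) ≤ ((maxHeight (Yword m ℓ) : ℤ) : ℝ) := by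
    have h := mh_ge ha (m*ℓ-1)
    rw [hY]
    exact_mod_cast h
  have hdel_le : del a j dd ≤ Hs a (m*ℓ-1) := by
    rw [← hjd, Hs_split]; omega
  have hLjb : L a j + 3*2^t ≤ 3*2^(t*ℓ) := Lbound hℓ t ht1
  have hwin_r : ((2*L a j + 2*del a j dd : ℕ) : ℝ) ≤ x := by
    have h1 : ((L a j : ℕ):ℝ) ≤ 3*((2:ℝ))^(t*ℓ) := by
      have h := le_trans (Nat.le_add_right (L a j) (3*2^t)) hLjb
      exact_mod_cast h
    have h2 : ((del a j dd : ℕ):ℝ) ≤ x/6 := by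
      calc ((del a j dd : ℕ):ℝ) ≤ ((Hs a (m*ℓ-1) : ℕ):ℝ) := by exact_mod_cast hdel_le
      _ ≤ ((maxHeight (Yword m ℓ) : ℤ):ℝ) := hHs_mh
      _ ≤ x/6 := by linarith
    push_cast
    linarith
  have hwin : 2*L a j + 2*del a j dd ≤ w.length := by
    exact_mod_cast le_trans hwin_r hlen
  have hocc_cond : u.length + 2*L a j + 2*del a j dd ≤ L a (j+dd) := by
    rw [hjd]; omega
  obtain ⟨u1, z1, heq, hb1, hb2⟩ := occ ha j dd u.length hocc_cond
  rw [hjd] at heq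
  have hLjlen : (Xword a j).length = L a j := rfl
  obtain ⟨p, q, hpq⟩ := extract hfac heq hb1 (by rw [hLjlen]; omega)
  obtain ⟨P, hP⟩ := suffix_negs ha j
  refine ⟨Hs a j, p ++ P, q, ?_, ?_⟩
  · have hHsj : Hs a j = ℓ * (2^t - 1) := Hs_eq hℓ t ht1
    have hq6 : (6:ℝ) ≤ (x/9) ^ ((1:ℝ)/(ℓ:ℝ)) := by
      have h1 : (((6:ℝ))^ℓ) ^ ((1:ℝ)/(ℓ:ℝ)) ≤ (x/9) ^ ((1:ℝ)/(ℓ:ℝ)) :=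
        Real.rpow_le_rpow (by positivity) hx9 (by positivity)
      have h2 : (((6:ℝ))^ℓ) ^ ((1:ℝ)/(ℓ:ℝ)) = 6 := by
        rw [← Real.rpow_natCast 6 ℓ, ← Real.rpow_mul (by norm_num), mul_one_div,
          div_self (show (ℓ:ℝ) ≠ 0 by positivity), Real.rpow_one]
      linarith
    have hqlt : (x/9) ^ ((1:ℝ)/(ℓ:ℝ)) < (2:ℝ)^(t+1) := by
      have h1 : (x/9) ^ ((1:ℝ)/(ℓ:ℝ)) < (((2:ℝ))^((t+1)*ℓ)) ^ ((1:ℝ)/(ℓ:ℝ)) :=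
        Real.rpow_lt_rpow (by positivity) hup (by positivity)
      have h2 : (((2:ℝ))^((t+1)*ℓ)) ^ ((1:ℝ)/(ℓ:ℝ)) = (2:ℝ)^(t+1) := by
        rw [pow_mul, ← Real.rpow_natCast ((2:ℝ)^(t+1)) ℓ, ← Real.rpow_mul (by positivity),
          mul_one_div, div_self (show (ℓ:ℝ) ≠ 0 by positivity), Real.rpow_one]
      linarith
    have ht2 : 2 ≤ t := by
      by_contra hc
      have hteq : t = 1 := by omega
      rw [hteq] at hqlt
      have h4 : ((2:ℝ))^(1+1) = 4 := by norm_num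
      rw [h4] at hqlt
      linarith
    have hp4 : (4:ℝ) ≤ (2:ℝ)^t := by
      calc (4:ℝ) = 2^2 := by norm_num
      _ ≤ 2^t := by exact pow_le_pow_right₀ (by norm_num) ht2
    have h2t1 : (2:ℝ)^(t+1) = 2*2^t := by ring
    have hcast : ((Hs a j : ℕ):ℝ) = (ℓ:ℝ) * ((2:ℝ)^t - 1) := by
      rw [hHsj]
      have h1 : (1:ℕ) ≤ 2^t := Nat.one_le_two_pow
      push_cast [h1]
      ring
    rw [hcast]
    have hq3 : (x/9) ^ ((1:ℝ)/(ℓ:ℝ)) ≤ 3*((2:ℝ)^t - 1) := by linarith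
    have hfin := mul_le_mul_of_nonneg_left hq3 (show (0:ℝ) ≤ (ℓ:ℝ)/3 by positivity)
    nlinarith [hfin]
  · rw [hpq, hP]
    simp [List.append_assoc]
end
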